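/- arXiv:2406.00963 — 10 statements merged into one kernel-verified Lean document; each statement's English description precedes it below -/
import Mathlib

section
/- For every n×n totally nonnegative real matrix A = (a_{i,j}), one has a_{1,1}·a_{2,2}⋯a_{n,n} ≤ per(A) ≤ n!·a_{1,1}·a_{2,2}⋯a_{n,n}. -/
open Matrix BigOperators

/-- The permanent of a square real matrix. -/
def per {r : ℕ} (B : Matrix (Fin r) (Fin r) ℝ) : ℝ :=
  ∑ σ : Equiv.Perm (Fin r), ∏ i, B i (σ i)

/-- An `n × n` real matrix is totally nonnegative if all its minors are nonnegative. -/
def TotallyNonneg {n : ℕ} (A : Matrix (Fin n) (Fin n) ℝ) : Prop :=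
  ∀ (k : ℕ) (f g : Fin k → Fin n), StrictMono f → StrictMono g →
    0 ≤ (A.submatrix f g).det

lemma key_prod_le {n : ℕ} (A : Matrix (Fin n) (Fin n) ℝ)
    (h0 : ∀ i j, 0 ≤ A i j)
    (h2 : ∀ i k j l : Fin n, i < k → j < l → A i l * A k j ≤ A i j * A k l)
    (σ : Equiv.Perm (Fin n)) : ∏ i, A i (σ i) ≤ ∏ i, A i i := by
  classical
  set M : Equiv.Perm (Fin n) → ℕ := fun τ => ∑ i : Fin n, (i : ℕ) * (τ i : ℕ) with hMdef
  have hMle : ∀ τ, M τ ≤ n * n * n := by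
    intro τ
    calc M τ ≤ ∑ _i : Fin n, n * n :=
          Finset.sum_le_sum fun i _ =>
            Nat.mul_le_mul (le_of_lt i.isLt) (le_of_lt (τ i).isLt)
      _ = n * n * n := by simp [Finset.sum_const, Finset.card_univ, mul_comm]
  have main : ∀ d (τ : Equiv.Perm (Fin n)),
      n * n * n + 1 - M τ ≤ d → ∏ i, A i (τ i) ≤ ∏ i, A i i := by
    intro d
    induction d with
    | zero =>
      intro τ hτ
      have := hMle τ
      omega
    | succ d ih =>
      intro τ hτ
      by_cases hmono : ∀ a b : Fin n, a < b → τ a < τ b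
      · have hsm : StrictMono τ := fun a b hab => hmono a b hab
        have hrange : Set.range (τ : Fin n → Fin n) = Set.range (id : Fin n → Fin n) := by
          rw [Set.range_id, Set.range_eq_univ]
          exact τ.surjective
        have : (τ : Fin n → Fin n) = id := by
          haveI : WellFoundedLT (Fin n) := inferInstance
          exact (hsm.range_inj strictMono_id).1 hrange
        simp [this]
      · push_neg at hmono
        obtain ⟨i, k, hik, hvk⟩ := hmono
        have hne : τ k ≠ τ i := fun h => (ne_of_lt hik) (τ.injective h.symm) |>.elim
        have hvlt : τ k < τ i := lt_of_le_of_ne hvk hne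
        set τ' : Equiv.Perm (Fin n) := τ * Equiv.swap i k with hτ'def
        have hτ'i : τ' i = τ k := by simp [hτ'def, Equiv.swap_apply_left]
        have hτ'k : τ' k = τ i := by simp [hτ'def, Equiv.swap_apply_right]
        have hτ'x : ∀ x, x ≠ i → x ≠ k → τ' x = τ x := by
          intro x hxi hxk
          simp [hτ'def, Equiv.swap_apply_of_ne_of_ne hxi hxk]
        have hikne : i ≠ k := ne_of_lt hik
        -- splitting products
        have prodsplit : ∀ (F : Fin n → ℝ),
            ∏ x, F x = F i * (F k * ∏ x ∈ (Finset.univ.erase i).erase k, F x) := by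
          intro F
          rw [Finset.mul_prod_erase _ _ (by simp [hikne.symm] :
                k ∈ Finset.univ.erase i),
              Finset.mul_prod_erase _ _ (Finset.mem_univ i)]
        have sumsplit : ∀ (G : Fin n → ℕ),
            ∑ x, G x = G i + (G k + ∑ x ∈ (Finset.univ.erase i).erase k, G x) := by
          intro G
          rw [Finset.add_sum_erase _ _ (by simp [hikne.symm] :
                k ∈ Finset.univ.erase i),
              Finset.add_sum_erase _ _ (Finset.mem_univ i)]
        -- the rest product is the same for τ and τ'
        have hrest : ∏ x ∈ (Finset.univ.erase i).erase k, A x (τ' x)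
            = ∏ x ∈ (Finset.univ.erase i).erase k, A x (τ x) := by
          refine Finset.prod_congr rfl fun y hy => ?_
          have h1 := (Finset.mem_erase.mp hy).1
          have h2' := (Finset.mem_erase.mp (Finset.mem_erase.mp hy).2).1
          rw [hτ'x y h2' h1]
        -- step inequality
        have hstep : ∏ x, A x (τ x) ≤ ∏ x, A x (τ' x) := by
          rw [prodsplit (fun x => A x (τ x)), prodsplit (fun x => A x (τ' x)),
            hτ'i, hτ'k, hrest]
          have hmul : A i (τ i) * A k (τ k) ≤ A i (τ k) * A k (τ i) :=
            h2 i k (τ k) (τ i) hik hvlt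
          have hprod0 : 0 ≤ ∏ x ∈ (Finset.univ.erase i).erase k, A x (τ x) :=
            Finset.prod_nonneg fun x _ => h0 _ _
          nlinarith [hmul, hprod0, h0 i (τ i), h0 k (τ k), h0 i (τ k), h0 k (τ i)]
        -- M increases
        have hMlt : M τ < M τ' := by
          rw [hMdef]
          simp only
          rw [sumsplit (fun x => (x : ℕ) * (τ x : ℕ)),
            sumsplit (fun x => (x : ℕ) * (τ' x : ℕ))]
          have hrest' : ∑ x ∈ (Finset.univ.erase i).erase k, (x : ℕ) * (τ' x : ℕ)
              = ∑ x ∈ (Finset.univ.erase i).erase k, (x : ℕ) * (τ x : ℕ) := by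
            refine Finset.sum_congr rfl fun y hy => ?_
            have h1 := (Finset.mem_erase.mp hy).1
            have h2' := (Finset.mem_erase.mp (Finset.mem_erase.mp hy).2).1
            rw [hτ'x y h2' h1]
          rw [hτ'i, hτ'k, hrest']
          have ha : (i : ℕ) < (k : ℕ) := hik
          have hc : ((τ k : Fin n) : ℕ) < ((τ i : Fin n) : ℕ) := hvlt
          have : (i : ℕ) * (τ i : ℕ) + (k : ℕ) * (τ k : ℕ)
              < (i : ℕ) * (τ k : ℕ) + (k : ℕ) * (τ i : ℕ) := by nlinarith
          omega
        have hgap : n * n * n + 1 - M τ' ≤ d := by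
          have := hMle τ'
          omega
        exact le_trans hstep (ih τ' hgap)
  exact main (n * n * n + 1 - M σ) σ le_rfl

theorem stmt0 (n : ℕ) (A : Matrix (Fin n) (Fin n) ℝ) (hA : TotallyNonneg A) :
    (∏ i, A i i) ≤ per A ∧ per A ≤ (Nat.factorial n : ℝ) * ∏ i, A i i := by
  classical
  have h0 : ∀ i j, 0 ≤ A i j := by
    intro i j
    have hsm1 : ∀ x : Fin n, StrictMono (fun _ : Fin 1 => x) := by
      intro x a b hab
      exact absurd hab (by rw [Subsingleton.elim a b]; exact lt_irrefl b)
    have := hA 1 (fun _ => i) (fun _ => j) (hsm1 i) (hsm1 j)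
    rwa [Matrix.det_fin_one] at this
  have h2 : ∀ i k j l : Fin n, i < k → j < l → A i l * A k j ≤ A i j * A k l := by
    intro i k j l hik hjl
    have hsm2 : ∀ x y : Fin n, x < y → StrictMono ![x, y] := by
      intro x y hxy a b hab
      fin_cases a <;> fin_cases b <;> simp_all
    have := hA 2 ![i, k] ![j, l] (hsm2 i k hik) (hsm2 j l hjl)
    rw [Matrix.det_fin_two] at this
    simp only [Matrix.submatrix_apply] at this
    simp only [Matrix.cons_val_zero, Matrix.cons_val_one, Matrix.head_cons] at this
    linarith
  have key := key_prod_le A h0 h2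
  constructor
  · have h1 := Finset.single_le_sum
      (f := fun σ : Equiv.Perm (Fin n) => ∏ i, A i (σ i))
      (fun σ _ => Finset.prod_nonneg fun i _ => h0 _ _)
      (Finset.mem_univ (1 : Equiv.Perm (Fin n)))
    simpa [per] using h1
  · calc per A ≤ ∑ _σ : Equiv.Perm (Fin n), ∏ i, A i i :=
          Finset.sum_le_sum fun σ _ => key σ
      _ = (Nat.factorial n : ℝ) * ∏ i, A i i := by
          simp [Finset.sum_const, Finset.card_univ, Fintype.card_perm, mul_comm]
end

section
/- Let v, w be permutations of {1,…,n}. Then the inequality ∏_{i=1}^n a_{i,v(i)} ≥ ∏_{i=1}^n a_{i,w(i)} holds for every totally nonnegative n×n real matrix A = (a_{i,j}) if and only if v ≤ w in the Bruhat order, i.e., if and only if for all i, j ∈ {1,…,n}, #{k ≤ i : v(k) ≤ j} ≥ #{k ≤ i : w(k) ≤ j}. -/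
/-!
If `v ≤ w` in the Bruhat order and `v ≠ w`, some transposition `v * swap a b` of an ascent
`a < b`, `v a < v b`, still lies below `w` and strictly above `v`; so `w` is reached from `v` by
a chain of such swaps. Along each swap the diagonal product of a totally nonnegative matrix can
only drop, by the `2 × 2` minor `A a (v a) * A b (v b) - A a (v b) * A b (v a) ≥ 0`.
Conversely, the totally nonnegative matrix with entries `2` on the upper left
`(i + 1) × (j + 1)` block and `1` elsewhere has diagonal product `2 ^ #{k ≤ i | σ k ≤ j}` along `σ`.
-/

open Matrix BigOperators

section BruhatOrder

open Finset Equiv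

variable {n : ℕ}

namespace TotallyNonneg

variable {A : Matrix (Fin n) (Fin n) ℝ}

lemma nonneg (hA : TotallyNonneg A) (x y : Fin n) : 0 ≤ A x y := by
  simpa [det_fin_one] using
    hA 1 (fun _ => x) (fun _ => y) (Subsingleton.strictMono _) (Subsingleton.strictMono _)

lemma mul_le_mul_of_lt (hA : TotallyNonneg A) {a b x y : Fin n} (hab : a < b) (hxy : x < y) :
    A a y * A b x ≤ A a x * A b y := by
  have h := hA 2 ![a, b] ![x, y] (Fin.strictMono_iff_lt_succ.2 (by simpa using hab))
    (Fin.strictMono_iff_lt_succ.2 (by simpa using hxy))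
  rw [det_fin_two] at h
  simp only [submatrix_apply] at h
  simpa [sub_nonneg] using h

lemma prod_mul_swap_le (hA : TotallyNonneg A) {v : Perm (Fin n)} {a b : Fin n} (hab : a < b)
    (hv : v a < v b) : ∏ i, A i ((v * swap a b) i) ≤ ∏ i, A i (v i) := by
  have hrest : ∏ i ∈ {a, b}ᶜ, A i ((v * swap a b) i) = ∏ i ∈ {a, b}ᶜ, A i (v i) := by
    refine prod_congr rfl fun i hi => ?_
    simp only [mem_compl, mem_insert, mem_singleton, not_or] at hi
    rw [Perm.mul_apply, swap_apply_of_ne_of_ne hi.1 hi.2]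
  rw [← prod_compl_mul_prod {a, b}, ← prod_compl_mul_prod {a, b} (fun i => A i (v i)), hrest,
    prod_pair hab.ne, prod_pair hab.ne]
  simp only [Perm.mul_apply, swap_apply_left, swap_apply_right]
  exact mul_le_mul_of_nonneg_left (hA.mul_le_mul_of_lt hab hv)
    (prod_nonneg fun i _ => hA.nonneg i (v i))

end TotallyNonneg

def ehresmannCount (σ : Perm (Fin n)) (i j : Fin n) : ℕ :=
  #{k | k ≤ i ∧ σ k ≤ j}

def BruhatLE (v w : Perm (Fin n)) : Prop :=
  ∀ i j, ehresmannCount w i j ≤ ehresmannCount v i j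

lemma ehresmannCount_eq_add {a i : Fin n} (σ : Perm (Fin n)) (hai : a ≤ i) (j : Fin n) :
    ehresmannCount σ i j = #{k | k < a ∧ σ k ≤ j} + #{k | a ≤ k ∧ k ≤ i ∧ σ k ≤ j} := by
  rw [ehresmannCount, ← card_union_of_disjoint (disjoint_filter.2 fun k _ h h' => by omega)]
  congr 1
  ext k
  simp only [mem_filter, mem_univ, true_and, mem_union]
  constructor
  · rintro ⟨hk, hσ⟩
    rcases lt_or_ge k a with h | h
    exacts [Or.inl ⟨h, hσ⟩, Or.inr ⟨h, hk, hσ⟩]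
  · rintro (⟨hk, hσ⟩ | ⟨-, hk, hσ⟩)
    exacts [⟨by omega, hσ⟩, ⟨hk, hσ⟩]

lemma ehresmannCount_mul_swap {v : Perm (Fin n)} {a b : Fin n} (hab : a < b) (hv : v a < v b)
    (i j : Fin n) :
    ehresmannCount (v * swap a b) i j + (if a ≤ i ∧ i < b ∧ v a ≤ j ∧ j < v b then 1 else 0) =
      ehresmannCount v i j := by
  have hreindex : ehresmannCount (v * swap a b) i j =
      ∑ k, if swap a b k ≤ i ∧ v k ≤ j then 1 else 0 := by
    rw [ehresmannCount, card_filter, ← Equiv.sum_comp (swap a b)]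
    simp [swap_apply_self]
  have hrest : ∑ k ∈ {a, b}ᶜ, (if swap a b k ≤ i ∧ v k ≤ j then 1 else 0) =
      ∑ k ∈ {a, b}ᶜ, if k ≤ i ∧ v k ≤ j then 1 else 0 := by
    refine sum_congr rfl fun k hk => ?_
    simp only [mem_compl, mem_insert, mem_singleton, not_or] at hk
    rw [swap_apply_of_ne_of_ne hk.1 hk.2]
  rw [hreindex, ehresmannCount, card_filter, ← sum_compl_add_sum {a, b},
    ← sum_compl_add_sum {a, b} (fun k => if k ≤ i ∧ v k ≤ j then 1 else 0), hrest,
    sum_pair hab.ne, sum_pair hab.ne, swap_apply_left, swap_apply_right]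
  split_ifs <;> omega

lemma exists_ne_and_forall_lt_eq {α β : Type*} [LT α] [WellFoundedLT α] {f g : α → β}
    (hne : f ≠ g) : ∃ a, f a ≠ g a ∧ ∀ k < a, f k = g k := by
  obtain ⟨k, hk⟩ : ∃ k, f k ≠ g k := by simpa [funext_iff] using hne
  obtain ⟨a, ha, hmin⟩ := wellFounded_lt.has_min {k | f k ≠ g k} ⟨k, hk⟩
  exact ⟨a, ha, fun k hk => not_not.1 fun h => hmin k h hk⟩

namespace BruhatLE

variable {v w : Perm (Fin n)} {a : Fin n}

lemma card_filter_lt_eq (hmin : ∀ k < a, v k = w k) (j : Fin n) :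
    #{k | k < a ∧ v k ≤ j} = #{k | k < a ∧ w k ≤ j} :=
  congr_arg card (filter_congr fun k _ => and_congr_right fun hk => by rw [hmin k hk])

lemma card_filter_Icc_le (h : BruhatLE v w) (hmin : ∀ k < a, v k = w k) {i : Fin n} (hai : a ≤ i)
    (j : Fin n) : #{k | a ≤ k ∧ k ≤ i ∧ w k ≤ j} ≤ #{k | a ≤ k ∧ k ≤ i ∧ v k ≤ j} := by
  have := h i j
  rwa [ehresmannCount_eq_add v hai, ehresmannCount_eq_add w hai, card_filter_lt_eq hmin,
    add_le_add_iff_left] at this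

lemma apply_lt (h : BruhatLE v w) (hmin : ∀ k < a, v k = w k) (hva : v a ≠ w a) : v a < w a := by
  have := h.card_filter_Icc_le hmin le_rfl (w a)
  simp only [card_filter] at this
  rw [sum_eq_single a (fun k _ hk => if_neg fun h => hk (le_antisymm h.2.1 h.1)) (by simp),
    sum_eq_single a (fun k _ hk => if_neg fun h => hk (le_antisymm h.2.1 h.1)) (by simp)] at this
  simp only [le_refl, true_and, if_true] at this
  split_ifs at this with hle
  exacts [lt_of_le_of_ne hle hva, absurd this (by norm_num)]

/-- By minimality of `b`, the counts of `v` on `[a, i]` at heights `j` and `w a` agree, while `a`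
itself is counted for `w` at height `w a` but not at height `j`. -/
lemma ehresmannCount_lt (h : BruhatLE v w) (hmin : ∀ k < a, v k = w k) {b i j : Fin n}
    (hbmin : ∀ k, a < k → v a < v k → v k ≤ w a → b ≤ k) (hvbw : v b ≤ w a)
    (hai : a ≤ i) (hib : i < b) (hj : v a ≤ j) (hjb : j < v b) :
    ehresmannCount w i j < ehresmannCount v i j := by
  rw [ehresmannCount_eq_add v hai, ehresmannCount_eq_add w hai, card_filter_lt_eq hmin,
    add_lt_add_iff_left]
  calc #{k | a ≤ k ∧ k ≤ i ∧ w k ≤ j}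
      < #{k | a ≤ k ∧ k ≤ i ∧ w k ≤ w a} := by
        refine card_lt_card ((ssubset_iff_of_subset fun k => ?_).2 ⟨a, ?_, ?_⟩)
        · simp only [mem_filter, mem_univ, true_and]
          exact fun hk => ⟨hk.1, hk.2.1, hk.2.2.trans (by omega)⟩
        · simp [hai]
        · simp only [mem_filter, mem_univ, true_and, not_and, not_le]
          exact fun _ _ => by omega
    _ ≤ #{k | a ≤ k ∧ k ≤ i ∧ v k ≤ w a} := h.card_filter_Icc_le hmin hai (w a)
    _ = #{k | a ≤ k ∧ k ≤ i ∧ v k ≤ j} := by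
        refine congr_arg card (filter_congr fun k _ => and_congr_right fun hak =>
          and_congr_right fun hki => ⟨fun hk => ?_, fun hk => by omega⟩)
        rcases hak.lt_or_eq with hlt | rfl
        · exact (not_lt.1 fun h => absurd (hbmin k hlt h hk) (by omega)).trans hj
        · exact hj

/-- Take `a` the first position where `v` and `w` differ and `b > a` the first position with
`v a < v b ≤ w a`. -/
lemma exists_swap (h : BruhatLE v w) (hne : v ≠ w) :
    ∃ a b, a < b ∧ v a < v b ∧ BruhatLE (v * swap a b) w := by
  obtain ⟨a, hva, hmin⟩ := exists_ne_and_forall_lt_eq (DFunLike.coe_injective.ne hne)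
  have hvwa := h.apply_lt hmin hva
  have hmem : a < v⁻¹ (w a) ∧ v a < v (v⁻¹ (w a)) ∧ v (v⁻¹ (w a)) ≤ w a := by
    refine ⟨lt_of_not_ge fun hle => ?_, by simpa using hvwa, by simp⟩
    rcases hle.lt_or_eq with hlt | heq
    · have hw : w (v⁻¹ (w a)) = w a := by rw [← hmin _ hlt]; simp
      exact hlt.ne (w.injective hw)
    · exact hva (Perm.inv_eq_iff_eq.1 heq).symm
  obtain ⟨b, ⟨hab, hvab, hvbw⟩, hbmin⟩ :=
    wellFounded_lt.has_min {k | a < k ∧ v a < v k ∧ v k ≤ w a} ⟨_, hmem⟩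
  refine ⟨a, b, hab, hvab, fun i j => ?_⟩
  have hswap := ehresmannCount_mul_swap hab hvab i j
  split_ifs at hswap with hrect
  · obtain ⟨hai, hib, hj, hjb⟩ := hrect
    have := h.ehresmannCount_lt hmin (fun k h1 h2 h3 => not_lt.1 (hbmin k ⟨h1, h2, h3⟩)) hvbw
      hai hib hj hjb
    omega
  · simpa [← hswap] using h i j

end BruhatLE

lemma sum_ehresmannCount_mul_swap_lt {v : Perm (Fin n)} {a b : Fin n} (hab : a < b)
    (hv : v a < v b) :
    ∑ i, ∑ j, ehresmannCount (v * swap a b) i j < ∑ i, ∑ j, ehresmannCount v i j := by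
  have hle : ∀ i j, ehresmannCount (v * swap a b) i j ≤ ehresmannCount v i j := fun i j =>
    (ehresmannCount_mul_swap hab hv i j).symm ▸ Nat.le_add_right _ _
  refine sum_lt_sum (fun i _ => sum_le_sum fun j _ => hle i j)
    ⟨a, mem_univ _, sum_lt_sum (fun j _ => hle a j) ⟨v a, mem_univ _, ?_⟩⟩
  have := ehresmannCount_mul_swap hab hv a (v a)
  rw [if_pos ⟨le_rfl, hab, le_rfl, hv⟩] at this
  omega

theorem BruhatLE.prod_le {A : Matrix (Fin n) (Fin n) ℝ} (hA : TotallyNonneg A)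
    {v w : Perm (Fin n)} (h : BruhatLE v w) : ∏ i, A i (w i) ≤ ∏ i, A i (v i) := by
  induction hs : ∑ i, ∑ j, ehresmannCount v i j using Nat.strong_induction_on generalizing v with
  | _ s ih =>
    by_cases hvw : v = w
    · rw [hvw]
    obtain ⟨a, b, hab, hvab, h'⟩ := h.exists_swap hvw
    exact (ih _ (hs ▸ sum_ehresmannCount_mul_swap_lt hab hvab) h' rfl).trans
      (hA.prod_mul_swap_le hab hvab)

def cornerMatrix (i j : Fin n) : Matrix (Fin n) (Fin n) ℝ :=
  fun k l => if k ≤ i ∧ l ≤ j then 2 else 1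

lemma prod_cornerMatrix (σ : Perm (Fin n)) (i j : Fin n) :
    ∏ k, cornerMatrix i j k (σ k) = 2 ^ ehresmannCount σ i j := by
  simp [cornerMatrix, prod_ite, ehresmannCount]

/-- `cornerMatrix i j` is the rank-two matrix `1 + x yᵀ` with `x`, `y` antitone `0`-`1` vectors:
its `2 × 2` minors are `(x₀ - x₁) (y₀ - y₁) ≥ 0`, and any three rows contain two equal ones. -/
lemma totallyNonneg_cornerMatrix (i j : Fin n) : TotallyNonneg (cornerMatrix i j) := by
  intro k f g hf hg
  match k with
  | 0 => simp
  | 1 => rw [det_fin_one]; simp only [submatrix_apply, cornerMatrix]; split_ifs <;> norm_num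
  | 2 =>
    have hf01 : f 0 < f 1 := hf (by decide)
    have hg01 : g 0 < g 1 := hg (by decide)
    rw [det_fin_two]
    simp only [submatrix_apply, cornerMatrix]
    split_ifs <;> first | (simp only [not_and, not_le] at *; omega) | norm_num
  | m + 3 =>
    obtain ⟨s, t, hst, heq⟩ := Fintype.exists_ne_map_eq_of_card_lt (fun s => decide (f s ≤ i))
      (by simp)
    refine (det_zero_of_row_eq hst (funext fun l => ?_)).ge
    simp only [submatrix_apply, cornerMatrix, decide_eq_decide.1 heq]

end BruhatOrder

theorem stmt1 (n : ℕ) (v w : Equiv.Perm (Fin n)) :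
    (∀ A : Matrix (Fin n) (Fin n) ℝ, TotallyNonneg A →
      (∏ i, A i (w i)) ≤ ∏ i, A i (v i)) ↔
    (∀ i j : Fin n,
      (Finset.univ.filter fun k => k ≤ i ∧ w k ≤ j).card ≤
      (Finset.univ.filter fun k => k ≤ i ∧ v k ≤ j).card) := by
  refine ⟨fun h i j => ?_, fun h A hA => BruhatLE.prod_le hA h⟩
  have := h _ (totallyNonneg_cornerMatrix i j)
  rwa [prod_cornerMatrix, prod_cornerMatrix, pow_le_pow_iff_right₀ one_lt_two] at this
end

section
/- Let C = (c_{i,j}) and D = (d_{i,j}) be n×n matrices of nonnegative integers having equal row sums (∑_j c_{i,j} = ∑_j d_{i,j} for every i) and equal column sums (∑_i c_{i,j} = ∑_i d_{i,j} for every j). Then the inequality ∏_{i,j} a_{i,j}^{c_{i,j}} ≥ ∏_{i,j} a_{i,j}^{d_{i,j}} holds for every totally nonnegative n×n real matrix A = (a_{i,j}) if and only if C* ≥ D* in the componentwise order (c*_{i,j} ≥ d*_{i,j} for all i, j). -/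
open Matrix BigOperators

/-- `cstar C i j = ∑_{a ≤ i, b ≤ j} C a b`. -/
def cstar {n : ℕ} (C : Matrix (Fin n) (Fin n) ℕ) (i j : Fin n) : ℕ :=
  ∑ a ∈ Finset.Iic i, ∑ b ∈ Finset.Iic j, C a b


/-!
If `D ≠ C` have the same margins and `D* ≤ C*`, there are `u < u'`, `v < v'` with
`D u v' > 0`, `D u' v > 0` such that untwisting `D` there, i.e. moving one unit from the
anti-diagonal corners `(u, v')`, `(u', v)` to the diagonal corners `(u, v)`, `(u', v')`, keeps
`D* ≤ C*`. The move preserves the margins, raises `D*` by one on the box `[u, u') × [v, v')`,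
and by the `2 × 2` minor inequality `a u v' * a u' v ≤ a u v * a u' v'` does not decrease
`∏ a ^ D`. Since `∑ D*` grows, iterating the move ends at `C`.

Conversely, the matrix `1 + x yᵀ`, with `x`, `y` the indicators of `[0, p]` and `[0, q]`, is
totally nonnegative (it has only two distinct rows, and its `2 × 2` minors are
`(x i - x i') * (y j - y j') ≥ 0`), and it turns `∏ a ^ X` into `2 ^ X* p q`.
-/

open Finset

namespace Matrix

variable {m n R : Type*}

theorem exists_first_ne {α : Type*} [Preorder m] [WellFoundedLT m] [Preorder n]
    [WellFoundedLT n] {A B : Matrix m n α} (h : A ≠ B) :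
    ∃ u v, A u v ≠ B u v ∧ (∀ a < u, ∀ t, A a t = B a t) ∧ ∀ t < v, A u t = B u t := by
  obtain ⟨u, ⟨v₀, hv₀⟩, hu⟩ := wellFounded_lt.has_min {a | ∃ t, A a t ≠ B a t} <| by
    by_contra! hAB
    exact h (Matrix.ext fun a t => by_contra fun hne => hAB.subset ⟨t, hne⟩)
  obtain ⟨v, hv, hvmin⟩ := wellFounded_lt.has_min {t | A u t ≠ B u t} ⟨v₀, hv₀⟩
  exact ⟨u, v, hv, fun a ha t => by_contra fun hne => hu a ⟨t, hne⟩ ha,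
    fun t ht => by_contra fun hne => hvmin t hne ht⟩

section single

variable [DecidableEq m] [DecidableEq n]

theorem exists_eq_add_single_add_single (D : Matrix m n ℕ) {x x' : m} {y y' : n}
    (hx : x ≠ x') (h : 0 < D x y) (h' : 0 < D x' y') :
    ∃ R, D = R + single x y 1 + single x' y' 1 :=
  ⟨D - single x y 1 - single x' y' 1, by
    ext a b
    simp only [add_apply, sub_apply, single_apply]
    split_ifs <;> grind⟩

theorem sum_row_untwist [Fintype n] (R : Matrix m n ℕ) (u u' : m) (v v' : n) (i : m) :
    ∑ j, (R + single u v 1 + single u' v' 1 : Matrix m n ℕ) i j =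
      ∑ j, (R + single u v' 1 + single u' v 1 : Matrix m n ℕ) i j := by
  simp [sum_add_distrib, single_apply, ite_and]

theorem sum_col_untwist [Fintype m] (R : Matrix m n ℕ) (u u' : m) (v v' : n) (j : n) :
    ∑ i, (R + single u v 1 + single u' v' 1 : Matrix m n ℕ) i j =
      ∑ i, (R + single u v' 1 + single u' v 1 : Matrix m n ℕ) i j := by
  simp [sum_add_distrib, single_apply, ite_and, add_right_comm]

end single

section prodPow

variable [Fintype m] [Fintype n]

def prodPow [CommMonoid R] (A : Matrix m n R) (X : Matrix m n ℕ) : R :=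
  ∏ i, ∏ j, A i j ^ X i j

theorem prodPow_add [CommMonoid R] (A : Matrix m n R) (X Y : Matrix m n ℕ) :
    prodPow A (X + Y) = prodPow A X * prodPow A Y := by
  simp only [prodPow, add_apply, pow_add, prod_mul_distrib]

theorem prodPow_single [CommMonoid R] [DecidableEq m] [DecidableEq n] (A : Matrix m n R)
    (i : m) (j : n) : prodPow A (single i j 1) = A i j := by
  simp [prodPow, single_apply, ite_and, pow_ite, prod_ite_eq]

theorem prodPow_nonneg [CommMonoidWithZero R] [PartialOrder R] [ZeroLEOneClass R] [PosMulMono R]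
    {A : Matrix m n R} (hA : ∀ i j, 0 ≤ A i j) (X : Matrix m n ℕ) : 0 ≤ prodPow A X :=
  prod_nonneg fun i _ => prod_nonneg fun j _ => pow_nonneg (hA i j) _

theorem prodPow_untwist_le [DecidableEq m] [DecidableEq n] {A : Matrix m n ℝ}
    (hA : ∀ i j, 0 ≤ A i j) (R : Matrix m n ℕ) {u u' : m} {v v' : n}
    (h : A u v' * A u' v ≤ A u v * A u' v') :
    prodPow A (R + single u v' 1 + single u' v 1) ≤
      prodPow A (R + single u v 1 + single u' v' 1) := by
  simp only [prodPow_add, prodPow_single, mul_assoc]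
  exact mul_le_mul_of_nonneg_left h (prodPow_nonneg hA R)

end prodPow

end Matrix

theorem exists_lt_pos_of_sum_Iic_lt {ι : Type*} [Fintype ι] [LinearOrder ι]
    [LocallyFiniteOrderBot ι] {f g : ι → ℕ} (hsum : ∑ t, f t = ∑ t, g t) {v : ι}
    (hlt : ∑ t ∈ Iic v, f t < ∑ t ∈ Iic v, g t) : ∃ t, v < t ∧ 0 < f t := by
  by_contra! h
  have hf : ∑ t ∈ Iic v, f t = ∑ t, f t :=
    sum_subset (subset_univ _) fun t _ ht => Nat.le_zero.1 (h t (not_le.1 (by simpa using ht)))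
  have hg : ∑ t ∈ Iic v, g t ≤ ∑ t, g t := sum_le_sum_of_subset (subset_univ _)
  omega

namespace TotallyNonneg

variable {n : ℕ} {A : Matrix (Fin n) (Fin n) ℝ}

theorem entry_nonneg (hA : TotallyNonneg A) (i j : Fin n) : 0 ≤ A i j := by
  have := hA 1 ![i] ![j] (Subsingleton.strictMono _) (Subsingleton.strictMono _)
  rwa [Matrix.det_fin_one] at this

theorem mul_le_mul_of_lt_of_lt (hA : TotallyNonneg A) {i i' j j' : Fin n} (hi : i < i')
    (hj : j < j') : A i j' * A i' j ≤ A i j * A i' j' := by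
  have := hA 2 ![i, i'] ![j, j'] (by simpa using hi) (by simpa using hj)
  rw [Matrix.det_fin_two] at this
  simpa [sub_nonneg] using this

end TotallyNonneg

def lowerIndicator {α : Type*} [LinearOrder α] (p i : α) : ℝ := if i ≤ p then 1 else 0

theorem antitone_lowerIndicator {α : Type*} [LinearOrder α] (p : α) :
    Antitone (lowerIndicator p) := by
  intro i i' h
  unfold lowerIndicator
  split_ifs with h' h'' <;> first | exact absurd (h.trans h') h'' | norm_num

section boxMatrix

variable {n : ℕ}

def boxMatrix (p q : Fin n) : Matrix (Fin n) (Fin n) ℝ :=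
  Matrix.of fun i j => if i ≤ p ∧ j ≤ q then 2 else 1

theorem boxMatrix_apply (p q i j : Fin n) :
    boxMatrix p q i j = 1 + lowerIndicator p i * lowerIndicator q j := by
  by_cases hi : i ≤ p <;> by_cases hj : j ≤ q <;>
    simp [boxMatrix, lowerIndicator, hi, hj, one_add_one_eq_two]

theorem totallyNonneg_boxMatrix (p q : Fin n) : TotallyNonneg (boxMatrix p q) := by
  intro k f g hf hg
  match k with
  | 0 => simp
  | 1 =>
    rw [Matrix.det_fin_one]
    simp only [boxMatrix, Matrix.submatrix_apply, Matrix.of_apply]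
    split_ifs <;> norm_num
  | 2 =>
    have hdet : (Matrix.submatrix (boxMatrix p q) f g).det =
        (lowerIndicator p (f 0) - lowerIndicator p (f 1)) *
          (lowerIndicator q (g 0) - lowerIndicator q (g 1)) := by
      simp only [Matrix.det_fin_two, Matrix.submatrix_apply, boxMatrix_apply]
      ring
    rw [hdet]
    exact mul_nonneg (sub_nonneg.2 (antitone_lowerIndicator p (hf Fin.zero_lt_one).le))
      (sub_nonneg.2 (antitone_lowerIndicator q (hg Fin.zero_lt_one).le))
  | k + 3 =>
    obtain ⟨r, r', hrr', heq⟩ := Fintype.exists_ne_map_eq_of_card_lt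
      (fun r => decide (f r ≤ p)) (by simp)
    refine (Matrix.det_zero_of_row_eq hrr' (funext fun c => ?_)).ge
    simp only [decide_eq_decide] at heq
    simp [boxMatrix, heq]

theorem prodPow_boxMatrix (p q : Fin n) (X : Matrix (Fin n) (Fin n) ℕ) :
    Matrix.prodPow (boxMatrix p q) X = 2 ^ cstar X p q := by
  have h : ∀ i j, (if i ≤ p ∧ j ≤ q then (2 : ℝ) else 1) ^ X i j =
      if i ≤ p then (if j ≤ q then 2 ^ X i j else 1) else 1 := by
    intro i j
    split_ifs <;> simp_all
  simp only [Matrix.prodPow, cstar, boxMatrix, Matrix.of_apply, h, prod_ite_irrel,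
    prod_const_one, ← prod_filter, filter_ge_eq_Iic, prod_pow_eq_pow_sum]

end boxMatrix

section cstar

variable {n : ℕ} {C D : Matrix (Fin n) (Fin n) ℕ}

theorem cstar_add (X Y : Matrix (Fin n) (Fin n) ℕ) (i j : Fin n) :
    cstar (X + Y) i j = cstar X i j + cstar Y i j := by
  simp only [cstar, Matrix.add_apply, sum_add_distrib]

theorem cstar_single (x y i j : Fin n) :
    cstar (Matrix.single x y 1) i j = if x ≤ i ∧ y ≤ j then 1 else 0 := by
  by_cases hx : x ≤ i <;> by_cases hy : y ≤ j <;>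
    simp [cstar, Matrix.single_apply, ite_and, hx, hy]

theorem cstar_untwist (R : Matrix (Fin n) (Fin n) ℕ) {u u' v v' : Fin n} (hu : u ≤ u')
    (hv : v ≤ v') (i j : Fin n) :
    cstar (R + Matrix.single u v 1 + Matrix.single u' v' 1) i j =
      cstar (R + Matrix.single u v' 1 + Matrix.single u' v 1) i j +
        if u ≤ i ∧ i < u' ∧ v ≤ j ∧ j < v' then 1 else 0 := by
  simp only [cstar_add, cstar_single]
  split_ifs <;> grind

theorem cstar_lt_cstar {X Y : Matrix (Fin n) (Fin n) ℕ} {i j : Fin n}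
    (hle : ∀ a ≤ i, ∀ t ≤ j, X a t ≤ Y a t) {a₀ t₀ : Fin n} (ha₀ : a₀ ≤ i) (ht₀ : t₀ ≤ j)
    (hlt : X a₀ t₀ < Y a₀ t₀) : cstar X i j < cstar Y i j :=
  sum_lt_sum (fun a ha => sum_le_sum fun t ht => hle a (mem_Iic.1 ha) t (mem_Iic.1 ht))
    ⟨a₀, mem_Iic.2 ha₀,
      sum_lt_sum (fun t ht => hle a₀ ha₀ t (mem_Iic.1 ht)) ⟨t₀, mem_Iic.2 ht₀, hlt⟩⟩

theorem cstar_eq_sum_Iio_add_sum_Icc (X : Matrix (Fin n) (Fin n) ℕ) (i : Fin n) {w j : Fin n}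
    (h : w ≤ j) :
    cstar X i j = ∑ a ∈ Iic i, ∑ t ∈ Iio w, X a t + ∑ a ∈ Iic i, ∑ t ∈ Icc w j, X a t := by
  have hunion : Iio w ∪ Icc w j = Iic j := by
    ext t
    simp only [mem_union, mem_Iio, mem_Icc, mem_Iic]
    grind
  rw [cstar, ← sum_add_distrib, ← hunion]
  refine sum_congr rfl fun a _ => sum_union ?_
  exact disjoint_left.2 fun t ht ht' => (mem_Iio.1 ht).not_ge (mem_Icc.1 ht').1

theorem sum_Iio_le_of_cstar_le (hdom : ∀ i j, cstar D i j ≤ cstar C i j) (i w : Fin n) :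
    ∑ a ∈ Iic i, ∑ t ∈ Iio w, D a t ≤ ∑ a ∈ Iic i, ∑ t ∈ Iio w, C a t := by
  rcases (Iio w).eq_empty_or_nonempty with h | h
  · simp [h]
  have hIio : Iio w = Iic ((Iio w).max' h) := by
    ext t
    simp only [mem_Iio, mem_Iic]
    exact ⟨fun ht => le_max' _ _ (mem_Iio.2 ht), fun ht => ht.trans_lt (mem_Iio.1 (max'_mem _ h))⟩
  rw [hIio]
  exact hdom i _

theorem cstar_lt_of_le_on_window (hdom : ∀ i j, cstar D i j ≤ cstar C i j) {i j w : Fin n}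
    (hw : w ≤ j) (hle : ∀ a ≤ i, ∀ t, w ≤ t → t ≤ j → D a t ≤ C a t) {a₀ t₀ : Fin n}
    (ha₀ : a₀ ≤ i) (ht₀ : w ≤ t₀) (ht₀j : t₀ ≤ j) (hlt : D a₀ t₀ < C a₀ t₀) :
    cstar D i j < cstar C i j := by
  rw [cstar_eq_sum_Iio_add_sum_Icc D i hw, cstar_eq_sum_Iio_add_sum_Icc C i hw]
  refine add_lt_add_of_le_of_lt (sum_Iio_le_of_cstar_le hdom i w) ?_
  have hle' : ∀ a ∈ Iic i, ∀ t ∈ Icc w j, D a t ≤ C a t := fun a ha t ht =>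
    hle a (mem_Iic.1 ha) t (mem_Icc.1 ht).1 (mem_Icc.1 ht).2
  exact sum_lt_sum (fun a ha => sum_le_sum (hle' a ha))
    ⟨a₀, mem_Iic.2 ha₀, sum_lt_sum (hle' a₀ (mem_Iic.2 ha₀)) ⟨t₀, mem_Icc.2 ⟨ht₀, ht₀j⟩, hlt⟩⟩

theorem exists_first_lt (hdom : ∀ i j, cstar D i j ≤ cstar C i j) (hne : D ≠ C) :
    ∃ u w, D u w < C u w ∧ (∀ a < u, ∀ t, D a t = C a t) ∧ ∀ t < w, D u t = C u t := by
  obtain ⟨u, w, hne, hrows, hcols⟩ := Matrix.exists_first_ne hne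
  refine ⟨u, w, lt_of_le_of_ne (not_lt.1 fun hlt => (hdom u w).not_gt ?_) hne, hrows, hcols⟩
  refine cstar_lt_cstar (fun a ha t ht => ?_) le_rfl le_rfl hlt
  rcases ha.lt_or_eq with ha | rfl
  · exact (hrows a ha t).ge
  rcases ht.lt_or_eq with ht | rfl
  · exact (hcols t ht).ge
  · exact hlt.le

theorem exists_untwist (hrow : ∀ i, ∑ j, C i j = ∑ j, D i j)
    (hcol : ∀ j, ∑ i, C i j = ∑ i, D i j) (hdom : ∀ i j, cstar D i j ≤ cstar C i j)
    (hne : D ≠ C) :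
    ∃ u u' v v', u < u' ∧ v < v' ∧ 0 < D u v' ∧ 0 < D u' v ∧
      ∀ i j, u ≤ i → i < u' → v ≤ j → j < v' → cstar D i j < cstar C i j := by
  obtain ⟨u, w, hlt, hrows, hcols⟩ := exists_first_lt hdom hne
  have hrow_lt : ∑ t ∈ Iic w, D u t < ∑ t ∈ Iic w, C u t :=
    sum_lt_sum (fun t ht => (mem_Iic.1 ht).lt_or_eq.elim (fun ht => (hcols t ht).le)
      fun ht => ht ▸ hlt.le) ⟨w, mem_Iic.2 le_rfl, hlt⟩
  have hcol_lt : ∑ a ∈ Iic u, D a w < ∑ a ∈ Iic u, C a w :=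
    sum_lt_sum (fun a ha => (mem_Iic.1 ha).lt_or_eq.elim (fun ha => (hrows a ha w).le)
      fun ha => ha ▸ hlt.le) ⟨u, mem_Iic.2 le_rfl, hlt⟩
  -- By the choice of `v'` and `u'`, `D` vanishes on `[u, u') × [w, v')` except at `(u, w)`.
  obtain ⟨v'₀, hv'₀⟩ := exists_lt_pos_of_sum_Iic_lt (hrow u).symm hrow_lt
  obtain ⟨v', ⟨hwv', hDv'⟩, hv'min⟩ :=
    wellFounded_lt.has_min {t | w < t ∧ 0 < D u t} ⟨v'₀, hv'₀⟩
  obtain ⟨u'₀, huu'₀, hDu'₀⟩ := exists_lt_pos_of_sum_Iic_lt (hcol w).symm hcol_lt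
  obtain ⟨u', ⟨huu', v, hwv, hvv', hDv⟩, hu'min⟩ :=
    wellFounded_lt.has_min {a | u < a ∧ ∃ t, w ≤ t ∧ t < v' ∧ 0 < D a t}
      ⟨u'₀, huu'₀, w, le_rfl, hwv', hDu'₀⟩
  refine ⟨u, u', v, v', huu', hvv', hDv', hDv, fun i j hui hiu' hvj hjv' => ?_⟩
  refine cstar_lt_of_le_on_window hdom (hwv.trans hvj) (fun a ha t hwt htj => ?_) hui le_rfl
    (hwv.trans hvj) hlt
  rcases lt_trichotomy a u with hau | rfl | hua
  · exact (hrows a hau t).le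
  · rcases hwt.lt_or_eq with hwt | rfl
    · exact (Nat.eq_zero_of_not_pos fun hpos =>
        hv'min t ⟨hwt, hpos⟩ (htj.trans_lt hjv')).trans_le (Nat.zero_le _)
    · exact hlt.le
  · exact (Nat.eq_zero_of_not_pos fun hpos =>
      hu'min a ⟨hua, t, hwt, htj.trans_lt hjv', hpos⟩ (ha.trans_lt hiu')).trans_le (Nat.zero_le _)

end cstar

open Matrix in
theorem prodPow_le_of_cstar_le {n : ℕ} {A : Matrix (Fin n) (Fin n) ℝ} (hA : ∀ i j, 0 ≤ A i j)
    (hA₂ : ∀ {i i' j j'}, i < i' → j < j' → A i j' * A i' j ≤ A i j * A i' j')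
    (C D : Matrix (Fin n) (Fin n) ℕ) (hrow : ∀ i, ∑ j, C i j = ∑ j, D i j)
    (hcol : ∀ j, ∑ i, C i j = ∑ i, D i j) (hdom : ∀ i j, cstar D i j ≤ cstar C i j) :
    prodPow A D ≤ prodPow A C := by
  by_cases hDC : D = C
  · rw [hDC]
  obtain ⟨u, u', v, v', huu', hvv', hDu, hDu', hlt⟩ := exists_untwist hrow hcol hdom hDC
  obtain ⟨R, hR⟩ := exists_eq_add_single_add_single D huu'.ne hDu hDu'
  obtain ⟨D', hD'⟩ : ∃ D', D' = R + single u v 1 + single u' v' 1 := ⟨_, rfl⟩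
  have hstep : ∀ i j, cstar D' i j =
      cstar D i j + if u ≤ i ∧ i < u' ∧ v ≤ j ∧ j < v' then 1 else 0 :=
    hR ▸ hD' ▸ cstar_untwist R huu'.le hvv'.le
  have hdom' : ∀ i j, cstar D' i j ≤ cstar C i j := by
    intro i j
    rw [hstep]
    split_ifs with h
    · exact hlt i j h.1 h.2.1 h.2.2.1 h.2.2.2
    · exact hdom i j
  have hgrow : ∑ p : Fin n × Fin n, cstar D p.1 p.2 < ∑ p : Fin n × Fin n, cstar D' p.1 p.2 :=
    sum_lt_sum (fun p _ => (hstep p.1 p.2).symm ▸ Nat.le_add_right _ _)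
      ⟨(u, v), mem_univ _, by simp [hstep, huu', hvv']⟩
  have hbound : ∑ p : Fin n × Fin n, cstar D' p.1 p.2 ≤ ∑ p : Fin n × Fin n, cstar C p.1 p.2 :=
    sum_le_sum fun p _ => hdom' p.1 p.2
  calc prodPow A D ≤ prodPow A D' := hR ▸ hD' ▸ prodPow_untwist_le hA R (hA₂ huu' hvv')
    _ ≤ prodPow A C := prodPow_le_of_cstar_le hA hA₂ C D'
        (fun i => (hrow i).trans (hR ▸ hD' ▸ (sum_row_untwist R u u' v v' i).symm))
        (fun j => (hcol j).trans (hR ▸ hD' ▸ (sum_col_untwist R u u' v v' j).symm)) hdom'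
termination_by (∑ p : Fin n × Fin n, cstar C p.1 p.2) - ∑ p : Fin n × Fin n, cstar D p.1 p.2
decreasing_by omega

theorem stmt2 (n : ℕ) (C D : Matrix (Fin n) (Fin n) ℕ)
    (hrow : ∀ i, ∑ j, C i j = ∑ j, D i j)
    (hcol : ∀ j, ∑ i, C i j = ∑ i, D i j) :
    (∀ A : Matrix (Fin n) (Fin n) ℝ, TotallyNonneg A →
      (∏ i, ∏ j, A i j ^ D i j) ≤ ∏ i, ∏ j, A i j ^ C i j) ↔
    (∀ i j, cstar D i j ≤ cstar C i j) := by
  refine ⟨fun h i j => ?_, fun hdom A hA =>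
    prodPow_le_of_cstar_le hA.entry_nonneg hA.mul_le_mul_of_lt_of_lt C D hrow hcol hdom⟩
  have hbox : Matrix.prodPow (boxMatrix i j) D ≤ Matrix.prodPow (boxMatrix i j) C :=
    h _ (totallyNonneg_boxMatrix i j)
  rwa [prodPow_boxMatrix, prodPow_boxMatrix, pow_le_pow_iff_right₀ one_lt_two] at hbox
end

section
/- Let C = (c_{i,j}) and D = (d_{i,j}) be n×n matrices of nonnegative integers. If the inequality ∏_{i,j} a_{i,j}^{c_{i,j}} ≥ ∏_{i,j} a_{i,j}^{d_{i,j}} holds for every totally nonnegative n×n real matrix A = (a_{i,j}), then C and D have equal row sums and equal column sums: ∑_j c_{i,j} = ∑_j d_{i,j} for every i, and ∑_i c_{i,j} = ∑_i d_{i,j} for every j. -/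
open Matrix BigOperators

/-!
Nonnegative rank-one matrices `x yᵀ` are totally nonnegative, and on them both sides of the
hypothesis factor as `∏ i, x i ^ (row sum i) * ∏ j, y j ^ (column sum j)`. Putting `t` in one
coordinate of `x` (or `y`) and `1` elsewhere gives `t ^ r_D ≤ t ^ r_C` for every `t > 0`; testing
`t = 2` and `t = 1/2` forces `r_C = r_D`.
-/

theorem Matrix.submatrix_vecMulVec {l m n o α : Type*} [Mul α] (x : m → α) (y : n → α)
    (f : l → m) (g : o → n) : (vecMulVec x y).submatrix f g = vecMulVec (x ∘ f) (y ∘ g) :=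
  rfl

theorem totallyNonneg_vecMulVec {n : ℕ} {x y : Fin n → ℝ} (hx : 0 ≤ x) (hy : 0 ≤ y) :
    TotallyNonneg (vecMulVec x y) := by
  intro k f g _ _
  rw [submatrix_vecMulVec]
  match k with
  | 0 => simp
  | 1 => simpa [vecMulVec_apply] using mul_nonneg (hx (f 0)) (hy (g 0))
  | _ + 2 => rw [det_vecMulVec]

theorem prod_prod_vecMulVec_pow {ι κ M : Type*} [Fintype ι] [Fintype κ] [CommMonoid M]
    (x : ι → M) (y : κ → M) (E : Matrix ι κ ℕ) :
    ∏ i, ∏ j, vecMulVec x y i j ^ E i j = (∏ i, x i ^ ∑ j, E i j) * ∏ j, y j ^ ∑ i, E i j := by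
  simp only [vecMulVec_apply, mul_pow, Finset.prod_mul_distrib, Finset.prod_pow_eq_pow_sum]
  rw [Finset.prod_comm (f := fun i j => y j ^ E i j)]
  simp only [Finset.prod_pow_eq_pow_sum]

theorem Fintype.prod_mulSingle_pow {ι M : Type*} [Fintype ι] [DecidableEq ι] [CommMonoid M]
    (a : ι) (t : M) (s : ι → ℕ) : ∏ i, Pi.mulSingle a t i ^ s i = t ^ s a := by
  simp [Pi.mulSingle_apply, ite_pow]

theorem Pi.mulSingle_nonneg {ι α : Type*} [DecidableEq ι] [Zero α] [One α] [Preorder α]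
    [ZeroLEOneClass α] (a : ι) {t : α} (ht : 0 ≤ t) : 0 ≤ (Pi.mulSingle a t : ι → α) := fun k => by
  rw [Pi.mulSingle_apply]
  split_ifs
  exacts [ht, zero_le_one]

theorem eq_of_forall_pow_le_pow {K : Type*} [Field K] [LinearOrder K] [IsStrictOrderedRing K]
    {c d : ℕ} (H : ∀ t : K, 0 < t → t ^ d ≤ t ^ c) : c = d := by
  have hdc : d ≤ c := (pow_le_pow_iff_right₀ one_lt_two).mp (H 2 two_pos)
  have hcd : c ≤ d := (pow_le_pow_iff_right_of_lt_one₀ (by norm_num) (by norm_num)).mp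
    (H (1 / 2) (by norm_num))
  exact le_antisymm hcd hdc

theorem stmt3 (n : ℕ) (C D : Matrix (Fin n) (Fin n) ℕ)
    (h : ∀ A : Matrix (Fin n) (Fin n) ℝ, TotallyNonneg A →
      (∏ i, ∏ j, A i j ^ D i j) ≤ ∏ i, ∏ j, A i j ^ C i j) :
    (∀ i, ∑ j, C i j = ∑ j, D i j) ∧ (∀ j, ∑ i, C i j = ∑ i, D i j) := by
  have hrankOne : ∀ x y : Fin n → ℝ, 0 ≤ x → 0 ≤ y →
      (∏ i, x i ^ ∑ j, D i j) * (∏ j, y j ^ ∑ i, D i j) ≤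
        (∏ i, x i ^ ∑ j, C i j) * ∏ j, y j ^ ∑ i, C i j := fun x y hx hy => by
    simpa only [prod_prod_vecMulVec_pow] using h _ (totallyNonneg_vecMulVec hx hy)
  refine ⟨fun i => eq_of_forall_pow_le_pow fun (t : ℝ) ht => ?_,
    fun j => eq_of_forall_pow_le_pow fun (t : ℝ) ht => ?_⟩
  · simpa [Fintype.prod_mulSingle_pow] using
      hrankOne _ 1 (Pi.mulSingle_nonneg i ht.le) zero_le_one
  · simpa [Fintype.prod_mulSingle_pow] using
      hrankOne 1 _ zero_le_one (Pi.mulSingle_nonneg j ht.le)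
end

section
/- Let (I_1,…,I_r), (I'_1,…,I'_r) and (J_1,…,J_q), (J'_1,…,J'_q) be sequences of weakly increasing tuples with entries in {1,…,n}, with |I_k| = |I'_k| for all k and |J_k| = |J'_k| for all k. Suppose that either (a) there exists B ∈ ℝ such that ∏_{k=1}^r per(A_{I_k,I'_k}) ≤ B·∏_{k=1}^q per(A_{J_k,J'_k}) for every totally positive n×n matrix A, or (b) there exists b > 0 such that ∏_{k=1}^r per(A_{I_k,I'_k}) ≥ b·∏_{k=1}^q per(A_{J_k,J'_k}) for every totally positive n×n matrix A. Then for each i ∈ {1,…,n}, the total number of entries equal to i among I_1,…,I_r equals the total number of entries equal to i among J_1,…,J_q, and the total number of entries equal to i among I'_1,…,I'_r equals the total number of entries equal to i among J'_1,…,J'_q (i.e., I_1 ⊎ ⋯ ⊎ I_r = J_1 ⊎ ⋯ ⊎ J_q and I'_1 ⊎ ⋯ ⊎ I'_r = J'_1 ⊎ ⋯ ⊎ J'_q as multisets). -/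
/-!
Scaling row `i` (or column `i`) of a totally positive matrix by `t > 0` keeps it totally positive
and multiplies each product of permanents by `t` raised to the number of occurrences of `i` among
the row (column) index tuples. A one-sided bound between the two products that holds for all `t`
forces these exponents to agree, by letting `t → ∞` and `t → 0`. A totally positive matrix to
scale is the Cauchy matrix `((i + j + 1)⁻¹)`: its minors are Cauchy matrices again, and one step
of Gaussian elimination reduces a Cauchy determinant to a smaller one times positive factors.
-/

open Matrix BigOperators

/-- An `n × n` real matrix is totally positive if all its minors are positive. -/
def TotallyPos {n : ℕ} (A : Matrix (Fin n) (Fin n) ℝ) : Prop :=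
  ∀ (k : ℕ) (f g : Fin k → Fin n), StrictMono f → StrictMono g →
    0 < (A.submatrix f g).det

section Cauchy

variable {K : Type*} [Field K]

theorem Matrix.det_succ_eq_mul_det_schur {m : ℕ} (A : Matrix (Fin (m + 1)) (Fin (m + 1)) K)
    (h : A 0 0 ≠ 0) :
    A.det = A 0 0 *
      (of fun i j : Fin m => A i.succ j.succ - A i.succ 0 / A 0 0 * A 0 j.succ).det := by
  set c : Fin (m + 1) → K := Fin.cases 0 fun i => A i.succ 0 / A 0 0
  set B : Matrix (Fin (m + 1)) (Fin (m + 1)) K := of fun i j => A i j - c i * A 0 j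
  have hB0 : ∀ j, B 0 j = A 0 j := by simp [B, c]
  have hAB : A.det = B.det :=
    det_eq_of_forall_row_eq_smul_add_const c 0 rfl fun i j => by simp only [hB0]; simp [B]
  have hcol : ∀ i : Fin m, B i.succ 0 = 0 := fun i => by simp [B, c, h]
  rw [hAB, det_succ_column_zero, Fin.sum_univ_succ]
  simp only [hcol, mul_zero, zero_mul, Finset.sum_const_zero, add_zero, hB0]
  simp [B, c, submatrix]

def cauchyMatrix {m p : Type*} (x : m → K) (y : p → K) : Matrix m p K :=
  of fun i j => (x i + y j)⁻¹

theorem det_cauchyMatrix_succ {m : ℕ} (x y : Fin (m + 1) → K) (h : ∀ i j, x i + y j ≠ 0) :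
    (cauchyMatrix x y).det = (x 0 + y 0)⁻¹ * (∏ i : Fin m, (x i.succ - x 0) / (x i.succ + y 0)) *
      (∏ j : Fin m, (y j.succ - y 0) / (x 0 + y j.succ)) *
        (cauchyMatrix (x ∘ Fin.succ) (y ∘ Fin.succ)).det := by
  have hschur : (of fun i j : Fin m => cauchyMatrix x y i.succ j.succ -
      cauchyMatrix x y i.succ 0 / cauchyMatrix x y 0 0 * cauchyMatrix x y 0 j.succ) =
      of fun i j => (x i.succ - x 0) / (x i.succ + y 0) *
        of (fun i j => (y j.succ - y 0) / (x 0 + y j.succ) *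
          cauchyMatrix (x ∘ Fin.succ) (y ∘ Fin.succ) i j) i j := by
    ext i j
    have := h i.succ j.succ; have := h i.succ 0; have := h 0 j.succ; have := h 0 0
    simp only [cauchyMatrix, of_apply, Function.comp_apply]
    field_simp
    ring
  rw [det_succ_eq_mul_det_schur _ (inv_ne_zero (h 0 0)), hschur, det_mul_column, det_mul_row]
  simp only [cauchyMatrix, of_apply, mul_assoc]

variable [LinearOrder K] [IsStrictOrderedRing K]

theorem det_cauchyMatrix_pos {m : ℕ} {x y : Fin m → K} (hx : StrictMono x) (hy : StrictMono y)
    (hxy : ∀ i j, 0 < x i + y j) : 0 < (cauchyMatrix x y).det := by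
  induction m with
  | zero => simp
  | succ m ih =>
    rw [det_cauchyMatrix_succ x y fun i j => (hxy i j).ne']
    have hx0 : ∀ i : Fin m, 0 < x i.succ - x 0 := fun i => sub_pos.2 (hx i.succ_pos)
    have hy0 : ∀ j : Fin m, 0 < y j.succ - y 0 := fun j => sub_pos.2 (hy j.succ_pos)
    have := hxy 0 0
    have := ih (hx.comp Fin.strictMono_succ) (hy.comp Fin.strictMono_succ) fun i j => hxy _ _
    have := Finset.prod_pos fun i (_ : i ∈ Finset.univ) => div_pos (hx0 i) (hxy i.succ 0)
    have := Finset.prod_pos fun j (_ : j ∈ Finset.univ) => div_pos (hy0 j) (hxy 0 j.succ)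
    positivity

end Cauchy

theorem totallyPos_cauchyMatrix {n : ℕ} {x y : Fin n → ℝ} (hx : StrictMono x) (hy : StrictMono y)
    (hxy : ∀ i j, 0 < x i + y j) : TotallyPos (cauchyMatrix x y) :=
  fun _ _ _ hf hg => det_cauchyMatrix_pos (hx.comp hf) (hy.comp hg) fun _ _ => hxy _ _

theorem Matrix.submatrix_diagonal_mul_mul_diagonal {m n p R : Type*} [CommSemiring R]
    [Fintype m] [Fintype n] [Fintype p] [DecidableEq m] [DecidableEq n] [DecidableEq p]
    (d e : n → R) (A : Matrix n n R) (f : m → n) (g : p → n) :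
    (diagonal d * A * diagonal e).submatrix f g =
      diagonal (d ∘ f) * A.submatrix f g * diagonal (e ∘ g) := by
  ext i j
  simp [diagonal_mul, mul_diagonal]

theorem TotallyPos.diagonal_mul_mul_diagonal {n : ℕ} {A : Matrix (Fin n) (Fin n) ℝ}
    (hA : TotallyPos A) {d e : Fin n → ℝ} (hd : ∀ i, 0 < d i) (he : ∀ j, 0 < e j) :
    TotallyPos (diagonal d * A * diagonal e) := by
  intro k f g hf hg
  rw [submatrix_diagonal_mul_mul_diagonal, det_mul, det_mul, det_diagonal, det_diagonal]
  have := hA k f g hf hg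
  have := Finset.prod_pos fun i (_ : i ∈ Finset.univ) => hd (f i)
  have := Finset.prod_pos fun j (_ : j ∈ Finset.univ) => he (g j)
  simp only [Function.comp_apply]
  positivity

theorem per_pos {r : ℕ} {B : Matrix (Fin r) (Fin r) ℝ} (hB : ∀ i j, 0 < B i j) : 0 < per B :=
  Finset.sum_pos (fun σ _ => Finset.prod_pos fun i _ => hB i (σ i)) Finset.univ_nonempty

theorem per_diagonal_mul_mul_diagonal {r : ℕ} (d e : Fin r → ℝ) (B : Matrix (Fin r) (Fin r) ℝ) :
    per (diagonal d * B * diagonal e) = (∏ i, d i) * (∏ j, e j) * per B := by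
  simp only [per, Finset.mul_sum, diagonal_mul, mul_diagonal]
  refine Finset.sum_congr rfl fun σ _ => ?_
  rw [← Equiv.prod_comp σ e, ← Finset.prod_mul_distrib, ← Finset.prod_mul_distrib]
  exact Finset.prod_congr rfl fun i _ => mul_right_comm _ _ _

theorem per_submatrix_diagonal_mul_mul_diagonal {n s : ℕ} (d e : Fin n → ℝ)
    (A : Matrix (Fin n) (Fin n) ℝ) (f g : Fin s → Fin n) :
    per ((diagonal d * A * diagonal e).submatrix f g) =
      (∏ a, d (f a)) * (∏ b, e (g b)) * per (A.submatrix f g) := by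
  rw [submatrix_diagonal_mul_mul_diagonal, per_diagonal_mul_mul_diagonal]
  rfl

theorem le_of_forall_pow_le_mul_pow {a b : ℕ} {C : ℝ} (h : ∀ t > 0, t ^ a ≤ C * t ^ b) :
    a ≤ b := by
  by_contra! hba
  set t := |C| + 1
  have ht : 1 ≤ t := le_add_of_nonneg_left (abs_nonneg C)
  have htb : 0 < t ^ b := by positivity
  have := h t (by positivity)
  have : C * t ^ b < t * t ^ b :=
    mul_lt_mul_of_pos_right ((le_abs_self C).trans_lt (by simp [t])) htb
  have : t ^ (b + 1) ≤ t ^ a := pow_le_pow_right₀ ht hba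
  rw [pow_succ'] at this
  linarith

theorem eq_of_forall_pow_mul_le {a b : ℕ} {P Q C : ℝ} (hP : 0 < P) (hQ : 0 < Q)
    (h : ∀ t > 0, t ^ a * P ≤ C * (t ^ b * Q)) : a = b := by
  have h' : ∀ t > 0, t ^ a ≤ C * Q / P * t ^ b := fun t ht => by
    rw [div_mul_eq_mul_div, le_div_iff₀ hP]
    linarith [h t ht]
  refine le_antisymm (le_of_forall_pow_le_mul_pow h')
    (le_of_forall_pow_le_mul_pow (C := C * Q / P) fun t ht => ?_)
  -- substituting `t⁻¹` for `t` swaps the roles of `a` and `b`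
  have key := h' t⁻¹ (inv_pos.2 ht)
  rw [inv_pow, inv_pow] at key
  have hta : 0 < t ^ a := by positivity
  have htb : 0 < t ^ b := by positivity
  calc t ^ b = t ^ a * t ^ b * (t ^ a)⁻¹ := by field_simp
    _ ≤ t ^ a * t ^ b * (C * Q / P * (t ^ b)⁻¹) := by gcongr
    _ = C * Q / P * t ^ a := by field_simp

section EntryCount

variable {n r : ℕ} {lI : Fin r → ℕ}

def entryCount (I : (k : Fin r) → Fin (lI k) → Fin n) (i : Fin n) : ℕ :=
  ∑ k, (Finset.univ.filter fun l => I k l = i).card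

theorem prod_prod_mulSingle_eq_pow_entryCount (I : (k : Fin r) → Fin (lI k) → Fin n)
    (i : Fin n) (t : ℝ) :
    ∏ k, ∏ l, (Pi.mulSingle i t : Fin n → ℝ) (I k l) = t ^ entryCount I i := by
  simp only [entryCount, Pi.mulSingle_apply, Finset.prod_ite, Finset.prod_const, one_pow,
    mul_one, Finset.prod_pow_eq_pow_sum]

end EntryCount

theorem entryCount_eq_of_forall_totallyPos_le {n r q : ℕ} {lI : Fin r → ℕ} {lJ : Fin q → ℕ}
    {I I' : (k : Fin r) → Fin (lI k) → Fin n} {J J' : (k : Fin q) → Fin (lJ k) → Fin n} {C : ℝ}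
    (h : ∀ A : Matrix (Fin n) (Fin n) ℝ, TotallyPos A →
      (∏ k, per (A.submatrix (I k) (I' k))) ≤ C * ∏ k, per (A.submatrix (J k) (J' k)))
    (i : Fin n) : entryCount I i = entryCount J i ∧ entryCount I' i = entryCount J' i := by
  set A₀ := cauchyMatrix (fun i : Fin n => ((i : ℕ) : ℝ)) fun j : Fin n => ((j : ℕ) : ℝ) + 1
  have hA₀ : TotallyPos A₀ :=
    totallyPos_cauchyMatrix (fun _ _ h => by simpa using h) (fun _ _ h => by simpa using h)
      fun _ _ => by positivity
  have hper : ∀ {s} (f g : Fin s → Fin n), 0 < per (A₀.submatrix f g) :=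
    fun _ _ => per_pos fun _ _ => by
      simp only [A₀, cauchyMatrix, submatrix_apply, of_apply]
      positivity
  have hPI := Finset.prod_pos fun k (_ : k ∈ Finset.univ) => hper (I k) (I' k)
  have hPJ := Finset.prod_pos fun k (_ : k ∈ Finset.univ) => hper (J k) (J' k)
  have hscaled : ∀ d e : Fin n → ℝ, (∀ i, 0 < d i) → (∀ j, 0 < e j) →
      (∏ k, ∏ l, d (I k l)) * (∏ k, ∏ l, e (I' k l)) * ∏ k, per (A₀.submatrix (I k) (I' k)) ≤
        C * ((∏ k, ∏ l, d (J k l)) * (∏ k, ∏ l, e (J' k l)) *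
          ∏ k, per (A₀.submatrix (J k) (J' k))) := fun d e hd he => by
    simpa only [per_submatrix_diagonal_mul_mul_diagonal, Finset.prod_mul_distrib]
      using h _ (hA₀.diagonal_mul_mul_diagonal hd he)
  have hmulSingle : ∀ t > 0, ∀ j, 0 < (Pi.mulSingle i t : Fin n → ℝ) j := fun t ht j => by
    rcases eq_or_ne j i with rfl | hj <;> simp [*]
  constructor
  · refine eq_of_forall_pow_mul_le (C := C) hPI hPJ fun t ht => ?_
    simpa only [prod_prod_mulSingle_eq_pow_entryCount, Pi.one_apply, Finset.prod_const_one,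
      mul_one] using hscaled _ 1 (hmulSingle t ht) fun _ => one_pos
  · refine eq_of_forall_pow_mul_le (C := C) hPI hPJ fun t ht => ?_
    simpa only [prod_prod_mulSingle_eq_pow_entryCount, Pi.one_apply, Finset.prod_const_one,
      one_mul] using hscaled 1 _ (fun _ => one_pos) (hmulSingle t ht)

theorem stmt4_general (n r q : ℕ) (lI : Fin r → ℕ) (lJ : Fin q → ℕ)
    (I I' : (k : Fin r) → Fin (lI k) → Fin n)
    (J J' : (k : Fin q) → Fin (lJ k) → Fin n)
    (hbound :
      (∃ B : ℝ, ∀ A : Matrix (Fin n) (Fin n) ℝ, TotallyPos A →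
        (∏ k, per (A.submatrix (I k) (I' k))) ≤
          B * ∏ k, per (A.submatrix (J k) (J' k))) ∨
      (∃ b : ℝ, 0 < b ∧ ∀ A : Matrix (Fin n) (Fin n) ℝ, TotallyPos A →
        b * (∏ k, per (A.submatrix (J k) (J' k))) ≤
          ∏ k, per (A.submatrix (I k) (I' k)))) :
    ∀ i : Fin n,
      ((∑ k, (Finset.univ.filter fun l => I k l = i).card) =
        ∑ k, (Finset.univ.filter fun l => J k l = i).card) ∧
      ((∑ k, (Finset.univ.filter fun l => I' k l = i).card) =
        ∑ k, (Finset.univ.filter fun l => J' k l = i).card) := by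
  rcases hbound with ⟨B, hB⟩ | ⟨b, hb, hbA⟩
  · exact entryCount_eq_of_forall_totallyPos_le hB
  · intro i
    have hJI : ∀ A, TotallyPos A →
        (∏ k, per (A.submatrix (J k) (J' k))) ≤ b⁻¹ * ∏ k, per (A.submatrix (I k) (I' k)) :=
      fun A hA => by rw [← div_eq_inv_mul, le_div_iff₀' hb]; exact hbA A hA
    exact (entryCount_eq_of_forall_totallyPos_le hJI i).imp Eq.symm Eq.symm

theorem stmt4 (n r q : ℕ) (lI : Fin r → ℕ) (lJ : Fin q → ℕ)
    (I I' : (k : Fin r) → Fin (lI k) → Fin n)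
    (J J' : (k : Fin q) → Fin (lJ k) → Fin n)
    (hI : ∀ k, Monotone (I k)) (hI' : ∀ k, Monotone (I' k))
    (hJ : ∀ k, Monotone (J k)) (hJ' : ∀ k, Monotone (J' k))
    (hbound :
      (∃ B : ℝ, ∀ A : Matrix (Fin n) (Fin n) ℝ, TotallyPos A →
        (∏ k, per (A.submatrix (I k) (I' k))) ≤
          B * ∏ k, per (A.submatrix (J k) (J' k))) ∨
      (∃ b : ℝ, 0 < b ∧ ∀ A : Matrix (Fin n) (Fin n) ℝ, TotallyPos A →
        b * (∏ k, per (A.submatrix (J k) (J' k))) ≤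
          ∏ k, per (A.submatrix (I k) (I' k)))) :
    ∀ i : Fin n,
      ((∑ k, (Finset.univ.filter fun l => I k l = i).card) =
        ∑ k, (Finset.univ.filter fun l => J k l = i).card) ∧
      ((∑ k, (Finset.univ.filter fun l => I' k l = i).card) =
        ∑ k, (Finset.univ.filter fun l => J' k l = i).card) :=
  stmt4_general n r q lI lJ I I' J J' hbound
end

section
/- Let (I_1,…,I_r), (I'_1,…,I'_r), (J_1,…,J_q), (J'_1,…,J'_q) be sequences of weakly increasing tuples with entries in {1,…,n}, with |I_k| = |I'_k| and |J_k| = |J'_k|, and suppose the exponent matrices of the diagonal monomials coincide: for all i, j ∈ {1,…,n}, ∑_k #{l : the l-th entry of I_k is i and the l-th entry of I'_k is j} = ∑_k #{l : the l-th entry of J_k is i and the l-th entry of J'_k is j}. Then for every totally positive n×n matrix A, (1/(|J_1|!⋯|J_q|!))·∏_{k=1}^q per(A_{J_k,J'_k}) ≤ ∏_{k=1}^r per(A_{I_k,I'_k}) ≤ |I_1|!⋯|I_r|!·∏_{k=1}^q per(A_{J_k,J'_k}). -/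
open Matrix BigOperators

/-!
Total positivity makes every entry and every `2 × 2` minor of `A` positive. For weakly
increasing `M`, `O`, the latter lets one move any term `∏ i, A (M i) (O (σ i))` of
`per (A.submatrix M O)` towards the diagonal term by transpositions without decreasing it, so
`∏ i, A (M i) (O i) ≤ per (A.submatrix M O) ≤ m! * ∏ i, A (M i) (O i)`. The product of the
diagonal terms over a family depends only on its exponent matrix, hence is the same for the
`I`- and the `J`-family, and the two bounds combine into the claim.
-/

open Finset Equiv

theorem TotallyPos.apply_pos {n : ℕ} {A : Matrix (Fin n) (Fin n) ℝ} (hA : TotallyPos A)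
    (i j : Fin n) : 0 < A i j := by
  simpa [det_fin_one] using
    hA 1 (fun _ => i) (fun _ => j) (Subsingleton.strictMono _) (Subsingleton.strictMono _)

theorem TotallyPos.antidiag_le_diag {n : ℕ} {A : Matrix (Fin n) (Fin n) ℝ} (hA : TotallyPos A)
    {i i' j j' : Fin n} (hi : i ≤ i') (hj : j ≤ j') :
    A i j' * A i' j ≤ A i j * A i' j' := by
  rcases hi.eq_or_lt with rfl | hi
  · rw [mul_comm]
  rcases hj.eq_or_lt with rfl | hj
  · rfl
  have hminor := hA 2 ![i, i'] ![j, j'] (Fin.strictMono_iff_lt_succ.2 (by simpa using hi))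
    (Fin.strictMono_iff_lt_succ.2 (by simpa using hj))
  rw [det_fin_two] at hminor
  simp only [submatrix_apply, cons_val_zero, cons_val_one] at hminor
  linarith

theorem prod_le_prod_of_eq_off_pair {ι : Type*} [Fintype ι] [DecidableEq ι] {f g : ι → ℝ}
    {a b : ι} (hab : a ≠ b) (hfg : ∀ i, i ≠ a → i ≠ b → f i = g i) (hg : ∀ i, 0 ≤ g i)
    (hpair : f a * f b ≤ g a * g b) : ∏ i, f i ≤ ∏ i, g i := by
  have hb : b ∈ univ.erase a := mem_erase.2 ⟨hab.symm, mem_univ b⟩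
  have hrest : ∏ i ∈ (univ.erase a).erase b, f i = ∏ i ∈ (univ.erase a).erase b, g i :=
    prod_congr rfl fun i hi => by
      obtain ⟨hib, hia, -⟩ := mem_erase.1 hi |>.imp_right mem_erase.1
      exact hfg i hia hib
  rw [← mul_prod_erase _ f (mem_univ a), ← mul_prod_erase _ f hb, ← mul_prod_erase _ g (mem_univ a),
    ← mul_prod_erase _ g hb, ← mul_assoc, ← mul_assoc, hrest]
  exact mul_le_mul_of_nonneg_right hpair (prod_nonneg fun i _ => hg i)

-- Rearrangement inequality for a log-supermodular kernel: repeatedly swapping the smallest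
-- point moved by `σ` back into place never decreases the product.
theorem prod_perm_le_prod_of_antidiag_le_diag {α ι : Type*} [LinearOrder α] [Fintype ι]
    [LinearOrder ι] {A : Matrix α α ℝ} (hA : ∀ i j, 0 ≤ A i j)
    (hA₂ : ∀ {i i' j j'}, i ≤ i' → j ≤ j' → A i j' * A i' j ≤ A i j * A i' j')
    {M O : ι → α} (hM : Monotone M) (hO : Monotone O) (σ : Perm ι) :
    ∏ i, A (M i) (O (σ i)) ≤ ∏ i, A (M i) (O i) := by
  induction hk : #σ.support using Nat.strong_induction_on generalizing σ with
  | _ k ih =>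
  rcases eq_or_ne σ 1 with rfl | hσ
  · simp
  set x := σ.support.min' (nonempty_iff_ne_empty.2 (Perm.support_eq_empty_iff.not.2 hσ))
  have hx : σ x ≠ x := Perm.mem_support.1 (min'_mem _ _)
  have hxy : x ≤ σ⁻¹ x :=
    min'_le _ _ (Perm.mem_support.2 fun h => hx (by simpa using congrArg σ h))
  have hxσ : x ≤ σ x := min'_le _ _ (Perm.mem_support.2 fun h => hx (σ.injective h))
  set τ := swap x (σ x) * σ
  calc ∏ i, A (M i) (O (σ i)) ≤ ∏ i, A (M i) (O (τ i)) := by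
        refine prod_le_prod_of_eq_off_pair (a := x) (b := σ⁻¹ x)
          (fun h => hx (by simpa using congrArg σ h)) (fun i hix hiy => ?_)
          (fun i => hA _ _) ?_
        · rw [Perm.mul_apply, swap_apply_of_ne_of_ne (fun h => hiy (by simp [← h]))
            (σ.injective.ne hix)]
        · simpa [τ, swap_apply_right] using hA₂ (hM hxy) (hO hxσ)
    _ ≤ ∏ i, A (M i) (O i) := ih _ (hk ▸ Perm.card_support_swap_mul hx) τ rfl

theorem TotallyPos.prod_perm_le_prod {n m : ℕ} {A : Matrix (Fin n) (Fin n) ℝ}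
    (hA : TotallyPos A) {M O : Fin m → Fin n} (hM : Monotone M) (hO : Monotone O)
    (σ : Perm (Fin m)) : ∏ i, A (M i) (O (σ i)) ≤ ∏ i, A (M i) (O i) :=
  prod_perm_le_prod_of_antidiag_le_diag (fun i j => (hA.apply_pos i j).le)
    hA.antidiag_le_diag hM hO σ

theorem prod_diag_le_per {m : ℕ} {B : Matrix (Fin m) (Fin m) ℝ} (hB : ∀ i j, 0 ≤ B i j) :
    ∏ i, B i i ≤ per B :=
  single_le_sum (f := fun σ : Perm (Fin m) => ∏ i, B i (σ i))
    (fun _ _ => prod_nonneg fun _ _ => hB _ _) (mem_univ 1)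

theorem per_le_factorial_mul_prod_diag {m : ℕ} {B : Matrix (Fin m) (Fin m) ℝ}
    (hB : ∀ σ : Perm (Fin m), ∏ i, B i (σ i) ≤ ∏ i, B i i) :
    per B ≤ m.factorial * ∏ i, B i i := by
  simpa [per, Fintype.card_perm] using sum_le_card_nsmul univ _ _ fun σ _ => hB σ

theorem prod_diag_eq_prod_pow_card {α ι R : Type*} [Fintype α] [DecidableEq α] [Fintype ι]
    [CommMonoid R] (A : Matrix α α R) (M O : ι → α) :
    ∏ l, A (M l) (O l) = ∏ i, ∏ j, A i j ^ #{l | M l = i ∧ O l = j} := by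
  rw [← Fintype.prod_prod_type', ← prod_fiberwise' univ (fun l => (M l, O l)) fun p => A p.1 p.2]
  refine prod_congr rfl fun p _ => ?_
  simp [Prod.ext_iff]

theorem prod_prod_diag_eq_of_card_eq {α κ κ' R : Type*} [Fintype α] [DecidableEq α] [Fintype κ]
    [Fintype κ'] [CommMonoid R] {lI : κ → ℕ} {lJ : κ' → ℕ} (A : Matrix α α R)
    (I I' : (k : κ) → Fin (lI k) → α) (J J' : (k : κ') → Fin (lJ k) → α)
    (hCD : ∀ i j : α,
      (∑ k, (univ.filter fun l => I k l = i ∧ I' k l = j).card) =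
        ∑ k, (univ.filter fun l => J k l = i ∧ J' k l = j).card) :
    ∏ k, ∏ l, A (I k l) (I' k l) = ∏ k, ∏ l, A (J k l) (J' k l) := by
  simp only [prod_diag_eq_prod_pow_card A]
  rw [prod_comm, prod_comm (s := (univ : Finset κ'))]
  refine prod_congr rfl fun i _ => ?_
  rw [prod_comm, prod_comm (s := (univ : Finset κ'))]
  simp only [prod_pow_eq_pow_sum, hCD]

section Families

variable {n : ℕ} {κ : Type*} [Fintype κ] {len : κ → ℕ} {A : Matrix (Fin n) (Fin n) ℝ}

theorem prod_prod_diag_le_prod_per (hA : ∀ i j, 0 ≤ A i j)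
    (I I' : (k : κ) → Fin (len k) → Fin n) :
    ∏ k, ∏ l, A (I k l) (I' k l) ≤ ∏ k, per (A.submatrix (I k) (I' k)) :=
  prod_le_prod (fun _ _ => prod_nonneg fun _ _ => hA _ _)
    fun k _ => prod_diag_le_per (B := A.submatrix (I k) (I' k)) fun _ _ => hA _ _

theorem TotallyPos.prod_per_le_prod_factorial_mul (hA : TotallyPos A)
    {I I' : (k : κ) → Fin (len k) → Fin n} (hI : ∀ k, Monotone (I k))
    (hI' : ∀ k, Monotone (I' k)) :
    ∏ k, per (A.submatrix (I k) (I' k)) ≤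
      (∏ k, ((len k).factorial : ℝ)) * ∏ k, ∏ l, A (I k l) (I' k l) := by
  rw [← prod_mul_distrib]
  exact prod_le_prod (fun k _ => (prod_nonneg fun _ _ => (hA.apply_pos _ _).le).trans <|
      prod_diag_le_per (B := A.submatrix (I k) (I' k)) fun _ _ => (hA.apply_pos _ _).le)
    fun k _ => per_le_factorial_mul_prod_diag (hA.prod_perm_le_prod (hI k) (hI' k))

end Families

theorem stmt6 (n r q : ℕ) (lI : Fin r → ℕ) (lJ : Fin q → ℕ)
    (I I' : (k : Fin r) → Fin (lI k) → Fin n)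
    (J J' : (k : Fin q) → Fin (lJ k) → Fin n)
    (hI : ∀ k, Monotone (I k)) (hI' : ∀ k, Monotone (I' k))
    (hJ : ∀ k, Monotone (J k)) (hJ' : ∀ k, Monotone (J' k))
    (hCD : ∀ i j : Fin n,
      (∑ k, (Finset.univ.filter fun l => I k l = i ∧ I' k l = j).card) =
        ∑ k, (Finset.univ.filter fun l => J k l = i ∧ J' k l = j).card) :
    ∀ A : Matrix (Fin n) (Fin n) ℝ, TotallyPos A →
      ((∏ k, (Nat.factorial (lJ k) : ℝ))⁻¹ * ∏ k, per (A.submatrix (J k) (J' k))) ≤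
          (∏ k, per (A.submatrix (I k) (I' k))) ∧
      (∏ k, per (A.submatrix (I k) (I' k))) ≤
        (∏ k, (Nat.factorial (lI k) : ℝ)) * ∏ k, per (A.submatrix (J k) (J' k)) := by
  intro A hA
  have hA₀ : ∀ i j, 0 ≤ A i j := fun i j => (hA.apply_pos i j).le
  have hdiag := prod_prod_diag_eq_of_card_eq A I I' J J' hCD
  constructor
  · rw [inv_mul_le_iff₀ (by positivity)]
    calc ∏ k, per (A.submatrix (J k) (J' k))
        ≤ (∏ k, ((lJ k).factorial : ℝ)) * ∏ k, ∏ l, A (J k l) (J' k l) :=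
          hA.prod_per_le_prod_factorial_mul hJ hJ'
      _ ≤ (∏ k, ((lJ k).factorial : ℝ)) * ∏ k, per (A.submatrix (I k) (I' k)) := by
          rw [← hdiag]
          exact mul_le_mul_of_nonneg_left (prod_prod_diag_le_prod_per hA₀ I I') (by positivity)
  · calc ∏ k, per (A.submatrix (I k) (I' k))
        ≤ (∏ k, ((lI k).factorial : ℝ)) * ∏ k, ∏ l, A (I k l) (I' k l) :=
          hA.prod_per_le_prod_factorial_mul hI hI'
      _ ≤ (∏ k, ((lI k).factorial : ℝ)) * ∏ k, per (A.submatrix (J k) (J' k)) := by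
          rw [hdiag]
          exact mul_le_mul_of_nonneg_left (prod_prod_diag_le_prod_per hA₀ J J') (by positivity)
end

section
/- For every totally positive 3×3 matrix A = (a_{i,j}), (1/2)·per(A)·a_{2,2} ≤ per(A_{{1,2},{1,2}})·per(A_{{2,3},{2,3}}) ≤ 2·per(A)·a_{2,2}. -/
/-!
Write `P = per(A_{12,12}) · per(A_{23,23})` and `X = a₁₂a₂₁a₂₃a₃₂`. Expanding both sides,
`per(A) · a₂₂ = P + S - X`, where `S` is `a₂₂` times the three terms of `per(A)` that use
`a₁₃` or `a₃₁`. Positivity of the `2 × 2` minors `a₁₂a₂₃ - a₁₃a₂₂` and `a₂₁a₃₂ - a₂₂a₃₁` makes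
each of the three summands of `S` smaller than `X`, and positivity of the diagonal minors gives
`a₁₁a₂₂ + a₁₂a₂₁ > 2a₁₂a₂₁` and `a₂₂a₃₃ + a₂₃a₃₂ > 2a₂₃a₃₂`, hence `P > 4X`.
Therefore `|per(A) · a₂₂ - P| < 2X < P / 2`.
-/

open Matrix BigOperators

lemma per_succ_row_zero {n : ℕ} (B : Matrix (Fin (n + 1)) (Fin (n + 1)) ℝ) :
    per B = ∑ j : Fin (n + 1), B 0 j *
      per (Matrix.of fun i k : Fin n => B i.succ (Equiv.swap 0 j k.succ)) := by
  rw [per, ← Equiv.Perm.decomposeFin.symm.sum_comp, Fintype.sum_prod_type]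
  refine Finset.sum_congr rfl fun j _ => ?_
  rw [per, Finset.mul_sum]
  refine Finset.sum_congr rfl fun σ _ => ?_
  simp only [Fin.prod_univ_succ, Equiv.Perm.decomposeFin_symm_apply_zero,
    Equiv.Perm.decomposeFin_symm_apply_succ, Matrix.of_apply]

lemma per_fin_one (B : Matrix (Fin 1) (Fin 1) ℝ) : per B = B 0 0 := by
  simp [per]

lemma per_fin_two (B : Matrix (Fin 2) (Fin 2) ℝ) :
    per B = B 0 0 * B 1 1 + B 0 1 * B 1 0 := by
  rw [per_succ_row_zero]
  simp [per_fin_one, Fin.sum_univ_succ, Equiv.swap_apply_def]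

lemma per_fin_three (B : Matrix (Fin 3) (Fin 3) ℝ) :
    per B = B 0 0 * B 1 1 * B 2 2 + B 0 0 * B 1 2 * B 2 1
      + B 0 1 * B 1 0 * B 2 2 + B 0 1 * B 1 2 * B 2 0
      + B 0 2 * B 1 0 * B 2 1 + B 0 2 * B 1 1 * B 2 0 := by
  rw [per_succ_row_zero, Fin.sum_univ_three]
  simp only [per_fin_two, Matrix.of_apply]
  simp [Equiv.swap_apply_def, Fin.ext_iff]
  ring

lemma per_fin_three_mul_eq (A : Matrix (Fin 3) (Fin 3) ℝ) :
    per A * A 1 1 =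
      per (A.submatrix ![0, 1] ![0, 1]) * per (A.submatrix ![1, 2] ![1, 2])
        + A 1 1 * (A 0 1 * A 1 2 * A 2 0 + A 0 2 * A 1 0 * A 2 1 + A 0 2 * A 1 1 * A 2 0)
        - A 0 1 * A 1 0 * A 1 2 * A 2 1 := by
  simp only [per_fin_three, per_fin_two, submatrix_apply, cons_val_zero, cons_val_one]
  ring

namespace TotallyPos

variable {n : ℕ} {A : Matrix (Fin n) (Fin n) ℝ}

theorem entry_pos (hA : TotallyPos A) (i j : Fin n) : 0 < A i j := by
  have h := hA 1 ![i] ![j] (Subsingleton.strictMono _) (Subsingleton.strictMono _)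
  rwa [det_fin_one] at h

theorem mul_antidiag_lt_mul_diag (hA : TotallyPos A) {i i' j j' : Fin n} (hi : i < i')
    (hj : j < j') : A i j' * A i' j < A i j * A i' j' := by
  have h := hA 2 ![i, i'] ![j, j'] (by simpa [Fin.strictMono_iff_lt_succ] using hi)
    (by simpa [Fin.strictMono_iff_lt_succ] using hj)
  rw [det_fin_two] at h
  simp only [submatrix_apply, cons_val_zero, cons_val_one] at h
  linarith

end TotallyPos

section FinThree

variable {A : Matrix (Fin 3) (Fin 3) ℝ}

theorem TotallyPos.center_mul_corner_terms_mem_Ioo (hA : TotallyPos A) :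
    A 1 1 * (A 0 1 * A 1 2 * A 2 0 + A 0 2 * A 1 0 * A 2 1 + A 0 2 * A 1 1 * A 2 0) ∈
      Set.Ioo 0 (3 * (A 0 1 * A 1 0 * A 1 2 * A 2 1)) := by
  have p := hA.entry_pos
  have h02 : A 0 2 * A 1 1 < A 0 1 * A 1 2 := hA.mul_antidiag_lt_mul_diag (by decide) (by decide)
  have h20 : A 1 1 * A 2 0 < A 1 0 * A 2 1 := hA.mul_antidiag_lt_mul_diag (by decide) (by decide)
  have t1 := mul_lt_mul_of_pos_left h20 (mul_pos (p 0 1) (p 1 2))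
  have t2 := mul_lt_mul_of_pos_right h02 (mul_pos (p 1 0) (p 2 1))
  have t3 := mul_lt_mul'' h02 h20 (mul_pos (p 0 2) (p 1 1)).le (mul_pos (p 1 1) (p 2 0)).le
  refine ⟨mul_pos (p 1 1) (add_pos (add_pos ?_ ?_) ?_), by linarith⟩
  · exact mul_pos (mul_pos (p 0 1) (p 1 2)) (p 2 0)
  · exact mul_pos (mul_pos (p 0 2) (p 1 0)) (p 2 1)
  · exact mul_pos (mul_pos (p 0 2) (p 1 1)) (p 2 0)

theorem TotallyPos.four_mul_cross_lt (hA : TotallyPos A) :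
    4 * (A 0 1 * A 1 0 * A 1 2 * A 2 1) <
      per (A.submatrix ![0, 1] ![0, 1]) * per (A.submatrix ![1, 2] ![1, 2]) := by
  have p := hA.entry_pos
  have h01 : A 0 1 * A 1 0 < A 0 0 * A 1 1 := hA.mul_antidiag_lt_mul_diag (by decide) (by decide)
  have h12 : A 1 2 * A 2 1 < A 1 1 * A 2 2 := hA.mul_antidiag_lt_mul_diag (by decide) (by decide)
  have per₁₂_gt : 2 * (A 0 1 * A 1 0) < A 0 0 * A 1 1 + A 0 1 * A 1 0 := by linarith
  have per₂₃_gt : 2 * (A 1 2 * A 2 1) < A 1 1 * A 2 2 + A 1 2 * A 2 1 := by linarith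
  have := mul_lt_mul'' per₁₂_gt per₂₃_gt (mul_pos two_pos (mul_pos (p 0 1) (p 1 0))).le
    (mul_pos two_pos (mul_pos (p 1 2) (p 2 1))).le
  simp only [per_fin_two, submatrix_apply, cons_val_zero, cons_val_one]
  linarith

end FinThree

theorem stmt9 (A : Matrix (Fin 3) (Fin 3) ℝ) (hA : TotallyPos A) :
    (1 / 2 : ℝ) * (per A * A 1 1) ≤
      per (A.submatrix ![0, 1] ![0, 1]) * per (A.submatrix ![1, 2] ![1, 2]) ∧
    per (A.submatrix ![0, 1] ![0, 1]) * per (A.submatrix ![1, 2] ![1, 2]) ≤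
      2 * (per A * A 1 1) := by
  obtain ⟨hS₀, hS₃⟩ := hA.center_mul_corner_terms_mem_Ioo
  have hX := hA.four_mul_cross_lt
  rw [per_fin_three_mul_eq]
  constructor <;> linarith
end

section
/- There exists a totally nonnegative 3×3 matrix A = (a_{i,j}) such that 3·per(A_{{1,3},{1,3}})·a_{2,2} < per(A); in fact the matrix with rows (1,1,0), (1,1,1), (1,1,1) is such a matrix. -/
/-!
All minors and permanents of the matrix are those of an integer matrix, so the claim is a finite
computation over `ℤ`, which `decide` carries out: the entries and 2 × 2 minors are `0` or `1`, the
determinant vanishes (two equal rows), `per A = 4` and `per A_{13,13} · a₂₂ = 1`.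
-/

open Matrix BigOperators

theorem RingHom.map_permanent {n R S : Type*} [DecidableEq n] [Fintype n] [CommSemiring R]
    [CommSemiring S] (f : R →+* S) (M : Matrix n n R) :
    f M.permanent = (f.mapMatrix M).permanent := by
  simp [Matrix.permanent, map_sum, map_prod]

theorem per_eq_permanent {r : ℕ} (B : Matrix (Fin r) (Fin r) ℝ) : per B = B.permanent := by
  rw [← permanent_transpose]
  rfl

theorem per_map_intCast {r : ℕ} (M : Matrix (Fin r) (Fin r) ℤ) :
    per (M.map ((↑) : ℤ → ℝ)) = M.permanent := by
  rw [per_eq_permanent]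
  exact ((Int.castRingHom ℝ).map_permanent M).symm

theorem totallyNonneg_map_intCast_iff {n : ℕ} (M : Matrix (Fin n) (Fin n) ℤ) :
    TotallyNonneg (M.map ((↑) : ℤ → ℝ)) ↔
      ∀ k ≤ n, ∀ f g : Fin k → Fin n, StrictMono f → StrictMono g →
        0 ≤ (M.submatrix f g).det := by
  have minor_cast (k : ℕ) (f g : Fin k → Fin n) :
      ((M.map ((↑) : ℤ → ℝ)).submatrix f g).det = (M.submatrix f g).det := by
    rw [Int.cast_det, submatrix_map]
  refine ⟨fun h k _ f g hf hg => ?_, fun h k f g hf hg => ?_⟩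
  · have minor_nonneg := h k f g hf hg
    rw [minor_cast] at minor_nonneg
    exact_mod_cast minor_nonneg
  · rw [minor_cast]
    exact_mod_cast h k (Fin.le_of_injective f hf.injective) f g hf hg

theorem stmt11 :
    ∃ A : Matrix (Fin 3) (Fin 3) ℝ,
      TotallyNonneg A ∧
      3 * (per (A.submatrix ![0, 2] ![0, 2]) * A 1 1) < per A ∧
      A = !![1, 1, 0; 1, 1, 1; 1, 1, 1] := by
  set M : Matrix (Fin 3) (Fin 3) ℤ := !![1, 1, 0; 1, 1, 1; 1, 1, 1]
  have hA : !![(1 : ℝ), 1, 0; 1, 1, 1; 1, 1, 1] = M.map (↑) := by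
    ext i j
    fin_cases i <;> fin_cases j <;> simp [M]
  refine ⟨_, ?_, ?_, rfl⟩
  · rw [hA, totallyNonneg_map_intCast_iff]
    unfold StrictMono
    decide
  · rw [hA, submatrix_map, per_map_intCast, per_map_intCast, map_apply]
    have : 3 * ((M.submatrix ![0, 2] ![0, 2]).permanent * M 1 1) < M.permanent := by decide
    exact_mod_cast this
end

section
/- Let m, o : {1,…,r} → {1,…,n} be weakly increasing functions, set α_i = #{j : m(j) = i} and β_j = #{i : o(i) = j}, and let P_m = {u ∈ S_r : m∘u = m} and P_o = {u ∈ S_r : o∘u = o}. Then the number of (P_m, P_o) double cosets in S_r (i.e., the cardinality of the quotient of S_r by the relation v ∼ w iff v = p·w·s for some p ∈ P_m, s ∈ P_o) equals the number of n×n matrices of nonnegative integers with row sums (α_1,…,α_n) and column sums (β_1,…,β_n). -/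
/-! Sending `w` to the contingency table of `m` against `o ∘ w`, whose `(i, j)` entry counts the
`k` with `m k = i` and `o (w k) = j`, identifies double cosets with tables. Two maps on a finite
set differ by a permutation of the domain iff their fibres have the same sizes; applied to
`k ↦ (m k, o (w k))` this shows that `w` and `v` have the same table iff `o ∘ v = o ∘ w ∘ q` for
some `m`-preserving `q`, i.e. iff they lie in the same double coset. Conversely a table with the
prescribed margins is the fibre-size table of some map into pairs, which can be rearranged so
that its first coordinate is `m` and its second is a rearrangement of `o`. -/

open Matrix BigOperators Finset

section Fibers

variable {α β : Type*} [Fintype α] [DecidableEq β]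

theorem exists_perm_comp_eq_iff_card_filter_eq (a b : α → β) :
    (∃ q : Equiv.Perm α, a ∘ q = b) ↔ ∀ x, #{k | a k = x} = #{k | b k = x} := by
  constructor
  · rintro ⟨q, rfl⟩ x
    exact card_equiv q.symm fun k => by simp
  · intro h
    have e : ∀ x, {k // b k = x} ≃ {k // a k = x} := fun x =>
      Fintype.equivOfCardEq (by simp only [Fintype.card_subtype, h x])
    exact ⟨Equiv.ofFiberEquiv e, funext (Equiv.ofFiberEquiv_map e)⟩

theorem card_filter_comp_perm_eq (a : α → β) (q : Equiv.Perm α) (x : β) :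
    #{k | a (q k) = x} = #{k | a k = x} :=
  ((exists_perm_comp_eq_iff_card_filter_eq a (a ∘ q)).mp ⟨q, rfl⟩ x).symm

theorem exists_card_filter_eq_of_sum_eq_card [Fintype β] (c : β → ℕ)
    (hc : ∑ x, c x = Fintype.card α) : ∃ a : α → β, ∀ x, #{k | a k = x} = c x := by
  let e : α ≃ Σ x, Fin (c x) := Fintype.equivOfCardEq (by simp [hc])
  refine ⟨fun k => (e k).1, fun x => ?_⟩
  rw [← Fintype.card_subtype, ← Fintype.card_fin (c x)]
  exact Fintype.card_congr ((e.subtypeEquiv fun _ => Iff.rfl).trans (Equiv.sigmaSubtype x))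

end Fibers

section ContingencyTable

variable {α ι κ : Type*} [Fintype α] [DecidableEq ι] [DecidableEq κ]

def contingencyTable (a : α → ι) (b : α → κ) : Matrix ι κ ℕ :=
  fun i j => #{k | a k = i ∧ b k = j}

theorem contingencyTable_eq_card_filter_prod (a : α → ι) (b : α → κ) (i : ι) (j : κ) :
    contingencyTable a b i j = #{k | (a k, b k) = (i, j)} := by
  simp [contingencyTable]

theorem sum_contingencyTable_row [Fintype κ] (a : α → ι) (b : α → κ) (i : ι) :
    ∑ j, contingencyTable a b i j = #{k | a k = i} := by
  rw [card_eq_sum_card_fiberwise (f := b) (t := univ) fun _ _ => mem_univ _]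
  simp only [contingencyTable, filter_filter]

theorem sum_contingencyTable_col [Fintype ι] (a : α → ι) (b : α → κ) (j : κ) :
    ∑ i, contingencyTable a b i j = #{k | b k = j} := by
  rw [card_eq_sum_card_fiberwise (f := a) (t := univ) fun _ _ => mem_univ _]
  simp only [contingencyTable, filter_filter, and_comm]

theorem contingencyTable_eq_iff (a a' : α → ι) (b b' : α → κ) :
    contingencyTable a b = contingencyTable a' b' ↔
      ∃ q : Equiv.Perm α, a ∘ q = a' ∧ b ∘ q = b' := by
  have key := exists_perm_comp_eq_iff_card_filter_eq (fun k => (a k, b k)) (fun k => (a' k, b' k))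
  simp only [funext_iff, Prod.forall, ← contingencyTable_eq_card_filter_prod,
    Function.comp_apply, Prod.mk.injEq, forall_and] at key ⊢
  rw [← Matrix.ext_iff, key]

theorem exists_contingencyTable_comp_perm_eq [Fintype ι] [Fintype κ] (a : α → ι) (b : α → κ)
    (M : Matrix ι κ ℕ) (hrow : ∀ i, ∑ j, M i j = #{k | a k = i})
    (hcol : ∀ j, ∑ i, M i j = #{k | b k = j}) :
    ∃ q : Equiv.Perm α, contingencyTable a (b ∘ q) = M := by
  have hsum : ∑ x : ι × κ, M x.1 x.2 = Fintype.card α := by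
    rw [Fintype.sum_prod_type, ← card_univ,
      card_eq_sum_card_fiberwise (f := a) (t := univ) fun _ _ => mem_univ _]
    simp only [hrow]
  obtain ⟨c, hc⟩ := exists_card_filter_eq_of_sum_eq_card (fun x : ι × κ => M x.1 x.2) hsum
  have hcM : contingencyTable (Prod.fst ∘ c) (Prod.snd ∘ c) = M := by
    ext i j
    simpa [contingencyTable_eq_card_filter_prod] using hc (i, j)
  obtain ⟨q₁, hq₁⟩ : ∃ q₁ : Equiv.Perm α, (Prod.fst ∘ c) ∘ q₁ = a :=
    (exists_perm_comp_eq_iff_card_filter_eq _ _).mpr fun i => by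
      rw [← sum_contingencyTable_row _ (Prod.snd ∘ c), hcM, hrow]
  obtain ⟨q, hq⟩ : ∃ q : Equiv.Perm α, b ∘ q = (Prod.snd ∘ c) ∘ q₁ :=
    (exists_perm_comp_eq_iff_card_filter_eq _ _).mpr fun j => by
      rw [← hcol, ← hcM, sum_contingencyTable_col]
      exact (card_filter_comp_perm_eq _ q₁ j).symm
  refine ⟨q, ?_⟩
  rw [← hcM, eq_comm, contingencyTable_eq_iff]
  exact ⟨q₁, hq₁, hq.symm⟩

theorem range_contingencyTable_comp_perm [Fintype ι] [Fintype κ] (a : α → ι) (b : α → κ) :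
    Set.range (fun w : Equiv.Perm α => contingencyTable a (b ∘ w)) =
      {M | (∀ i, ∑ j, M i j = #{k | a k = i}) ∧ ∀ j, ∑ i, M i j = #{k | b k = j}} := by
  ext M
  constructor
  · rintro ⟨w, rfl⟩
    refine ⟨sum_contingencyTable_row a _, fun j => ?_⟩
    rw [sum_contingencyTable_col]
    exact card_filter_comp_perm_eq b w j
  · rintro ⟨hrow, hcol⟩
    exact exists_contingencyTable_comp_perm_eq a b M hrow hcol

end ContingencyTable

theorem Set.ncard_range_eq_of_forall_eq_iff {X Y Z : Type*} (f : X → Y) (g : X → Z)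
    (h : ∀ x y, f x = f y ↔ g x = g y) : (Set.range f).ncard = (Set.range g).ncard := by
  rw [← Nat.card_coe_set_eq, ← Nat.card_coe_set_eq,
    ← Nat.card_congr (Setoid.quotientKerEquivRange f),
    ← Nat.card_congr (Setoid.quotientKerEquivRange g),
    show Setoid.ker f = Setoid.ker g from Setoid.ext h]

namespace Equiv.Perm

variable {α β γ : Type*}

def fiberStabilizer (f : α → β) : Subgroup (Perm α) where
  carrier := {p | ∀ k, f (p k) = f k}
  mul_mem' hp hq k := (hp _).trans (hq k)
  one_mem' _ := rfl
  inv_mem' {p} hp k := by simpa using (hp (p⁻¹ k)).symm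

theorem doubleCoset_fiberStabilizer (a : α → β) (b : α → γ) (w : Perm α) :
    DoubleCoset.doubleCoset w (fiberStabilizer b) (fiberStabilizer a) =
      {v | ∃ p s : Perm α, (∀ i, a (p i) = a i) ∧ (∀ i, b (s i) = b i) ∧
        v = (p.trans w).trans s} := by
  ext v
  rw [DoubleCoset.mem_doubleCoset]
  constructor
  · rintro ⟨s, hs, p, hp, rfl⟩
    exact ⟨p, s, hp, hs, rfl⟩
  · rintro ⟨p, s, hp, hs, rfl⟩
    exact ⟨s, hs, p, hp, rfl⟩

theorem doubleCoset_fiberStabilizer_eq_iff [Fintype α] [DecidableEq β] [DecidableEq γ]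
    (a : α → β) (b : α → γ) (w v : Perm α) :
    DoubleCoset.doubleCoset w (fiberStabilizer b) (fiberStabilizer a) =
        DoubleCoset.doubleCoset v (fiberStabilizer b) (fiberStabilizer a) ↔
      contingencyTable a (b ∘ w) = contingencyTable a (b ∘ v) := by
  refine DoubleCoset.rel_iff.trans ?_
  rw [contingencyTable_eq_iff]
  constructor
  · rintro ⟨s, hs, p, hp, rfl⟩
    exact ⟨p, funext hp, funext fun k => (hs _).symm⟩
  · rintro ⟨q, hqa, hqb⟩
    refine ⟨v * q⁻¹ * w⁻¹, fun k => ?_, q, congrFun hqa, by group⟩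
    simpa using (congrFun hqb (q⁻¹ (w⁻¹ k))).symm

end Equiv.Perm

theorem stmt16_general (r n : ℕ) (m o : Fin r → Fin n) :
    Set.ncard
      (Set.range fun w : Equiv.Perm (Fin r) =>
        {v : Equiv.Perm (Fin r) | ∃ p s : Equiv.Perm (Fin r),
          (∀ i, m (p i) = m i) ∧ (∀ i, o (s i) = o i) ∧ v = (p.trans w).trans s}) =
    Set.ncard
      {M : Matrix (Fin n) (Fin n) ℕ |
        (∀ i, ∑ j, M i j = (Finset.univ.filter fun l => m l = i).card) ∧
        (∀ j, ∑ i, M i j = (Finset.univ.filter fun l => o l = j).card)} := by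
  simp only [← Equiv.Perm.doubleCoset_fiberStabilizer]
  rw [Set.ncard_range_eq_of_forall_eq_iff _ _
      (Equiv.Perm.doubleCoset_fiberStabilizer_eq_iff m o),
    range_contingencyTable_comp_perm]

theorem stmt16 (r n : ℕ) (m o : Fin r → Fin n) (hm : Monotone m) (ho : Monotone o) :
    Set.ncard
      (Set.range fun w : Equiv.Perm (Fin r) =>
        {v : Equiv.Perm (Fin r) | ∃ p s : Equiv.Perm (Fin r),
          (∀ i, m (p i) = m i) ∧ (∀ i, o (s i) = o i) ∧ v = (p.trans w).trans s}) =
    Set.ncard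
      {M : Matrix (Fin n) (Fin n) ℕ |
        (∀ i, ∑ j, M i j = (Finset.univ.filter fun l => m l = i).card) ∧
        (∀ j, ∑ i, M i j = (Finset.univ.filter fun l => o l = j).card)} :=
  stmt16_general r n m o
end

section
/- Let C = (c_{i,j}) and D = (d_{i,j}) be n×n matrices of nonnegative integers with equal row sums and equal column sums, and suppose C* ≥ D* in the componentwise order. Then in the polynomial ring ℤ[x_{1,1},…,x_{n,n}], the difference ∏_{i,j} x_{i,j}^{c_{i,j}} − ∏_{i,j} x_{i,j}^{d_{i,j}} can be written as a finite sum of terms of the form (x_{i,j}·x_{i',j'} − x_{i,j'}·x_{i',j})·μ, where i < i', j < j', and μ is a monomial (a finite product of variables x_{a,b}). -/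
open Matrix BigOperators MvPolynomial

/-!
Extend `C` and `D` by zero to `ℕ × ℕ` and put `f i j = ∑_{a < i, b < j} (C - D) a b`, so that
`f (i+1) (j+1) = C* i j - D* i j ≥ 0` and, by the equal margins, `f` vanishes from row and
column `n` on. If `C ≠ D`, let `(p+1, q+1)` be the first point, scanning column by column, where
`f > 0`; then `C p q > 0`. Let rows `p+1, …, b` be the run on which `f (·) (q+1) > 0`. Some column
`β > q` contains an entry `C r β > 0` with `p < r ≤ b`: otherwise the sum of `C - D` over rows
`p+1..b` and columns `q+1..n-1` would be `≤ 0` and also equal to `f (p+1) (q+1) > 0`. As `C`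
vanishes on those rows strictly between columns `q` and the first such `β`, `f ≥ 1` on
`(p, r] × (q, β]`. Trading the diagonal pair `C p q`, `C r β` for the antidiagonal pair lowers `C*`
by the indicator of that rectangle, so keeps `C* ≥ D*`, and changes `x^C` by a `2 × 2` minor times
a monomial. Induct on `∑ C*`.
-/

open Finset

namespace DominanceOrder

def prefixSum (c : Matrix ℕ ℕ ℕ) (i j : ℕ) : ℕ :=
  ∑ a ∈ range i, ∑ b ∈ range j, c a b

lemma prefixSum_add (c c' : Matrix ℕ ℕ ℕ) (i j : ℕ) :
    prefixSum (c + c') i j = prefixSum c i j + prefixSum c' i j := by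
  simp only [prefixSum, Matrix.add_apply, sum_add_distrib]

lemma prefixSum_single (r s i j : ℕ) :
    prefixSum (single r s 1) i j = if r < i ∧ s < j then 1 else 0 := by
  simp [prefixSum, single_apply, sum_ite_eq, ite_and]

lemma prefixSum_add_prefixSum {k i l j : ℕ} (c : Matrix ℕ ℕ ℕ) (hki : k ≤ i) (hlj : l ≤ j) :
    prefixSum c i j + prefixSum c k l =
      prefixSum c k j + prefixSum c i l + ∑ r ∈ Ico k i, ∑ s ∈ Ico l j, c r s := by
  simp only [prefixSum, ← sum_range_add_sum_Ico _ hki, ← sum_range_add_sum_Ico _ hlj,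
    sum_add_distrib]
  ring

def gap (c d : Matrix ℕ ℕ ℕ) (i j : ℕ) : ℤ := prefixSum c i j - prefixSum d i j

variable {c d : Matrix ℕ ℕ ℕ}

@[simp] lemma gap_zero_left (c d : Matrix ℕ ℕ ℕ) (j : ℕ) : gap c d 0 j = 0 := by
  simp [gap, prefixSum]

@[simp] lemma gap_zero_right (c d : Matrix ℕ ℕ ℕ) (i : ℕ) : gap c d i 0 = 0 := by
  simp [gap, prefixSum]

lemma gap_rect_eq_sum {k i l j : ℕ} (hki : k ≤ i) (hlj : l ≤ j) :
    gap c d i j - gap c d k j - gap c d i l + gap c d k l =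
      ∑ r ∈ Ico k i, ∑ s ∈ Ico l j, ((c r s : ℤ) - d r s) := by
  have hc := prefixSum_add_prefixSum c hki hlj
  have hd := prefixSum_add_prefixSum d hki hlj
  simp only [gap, sum_sub_distrib]
  push_cast [← Nat.cast_inj (R := ℤ)] at hc hd
  linarith

lemma gap_sub_le_of_eq_zero {i k l j : ℕ} (hik : i ≤ k) (hlj : l ≤ j)
    (hc : ∀ r ∈ Ico i k, ∀ s ∈ Ico l j, c r s = 0) :
    gap c d k j - gap c d k l ≤ gap c d i j - gap c d i l := by
  have hsum : ∑ r ∈ Ico i k, ∑ s ∈ Ico l j, ((c r s : ℤ) - d r s) ≤ 0 :=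
    sum_nonpos fun r hr => sum_nonpos fun s hs => by simp [hc r hr s hs]
  linarith [gap_rect_eq_sum (c := c) (d := d) hik hlj]

lemma exists_run_end {P : ℕ → Prop} [DecidablePred P] {k N : ℕ} (hk : P k)
    (hN : ∀ m, N ≤ m → ¬ P m) : ∃ b, k ≤ b ∧ ¬ P (b + 1) ∧ ∀ i, k ≤ i → i ≤ b → P i := by
  have hex : ∃ b, k ≤ b ∧ ¬ P (b + 1) := ⟨k + N, by omega, hN _ (by omega)⟩
  refine ⟨Nat.find hex, (Nat.find_spec hex).1, (Nat.find_spec hex).2, fun i hki hib => ?_⟩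
  obtain rfl | hki := hki.eq_or_lt
  · exact hk
  · obtain ⟨i, rfl⟩ : ∃ i', i = i' + 1 := ⟨i - 1, by omega⟩
    by_contra hi
    exact Nat.find_min hex (by omega) ⟨by omega, hi⟩

lemma exists_corner (hnonneg : ∀ i j, 0 ≤ gap c d i j) (hpos : ∃ i j, 0 < gap c d i j) :
    ∃ p q, 0 < gap c d (p + 1) (q + 1) ∧ gap c d p (q + 1) = 0 ∧ ∀ i, gap c d i q = 0 := by
  classical
  have hcol : ∃ j, ∃ i, 0 < gap c d i j := exists_comm.mp hpos
  have hrow := Nat.find_spec hcol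
  have hp₀ := Nat.find_spec hrow
  have hq : Nat.find hcol ≠ 0 := fun h => by simp [h] at hp₀
  have hp : Nat.find hrow ≠ 0 := fun h => by simp [h] at hp₀
  obtain ⟨q, hq⟩ := Nat.exists_eq_add_one_of_ne_zero hq
  obtain ⟨p, hp⟩ := Nat.exists_eq_add_one_of_ne_zero hp
  refine ⟨p, q, ?_, ?_, fun i => ?_⟩
  · rwa [← hp, ← hq]
  · have := Nat.find_min hrow (show p < Nat.find hrow by omega)
    rw [← hq]
    exact (hnonneg _ _).antisymm' (not_lt.1 this)
  · have := Nat.find_min hcol (show q < Nat.find hcol by omega)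
    simp only [not_exists, not_lt] at this
    exact (hnonneg _ _).antisymm' (this i)

/-- For `c`, `d` supported in `[0, N)²`: `c* ≥ d*`, and `c`, `d` have the same row and column
sums. -/
structure Dominates (N : ℕ) (c d : Matrix ℕ ℕ ℕ) : Prop where
  gap_nonneg : ∀ i j, 0 ≤ gap c d i j
  gap_eq_zero : ∀ i j, N ≤ i ∨ N ≤ j → gap c d i j = 0

lemma Dominates.exists_gap_pos {N : ℕ} (h : Dominates N c d) (hcd : c ≠ d) :
    ∃ i j, 0 < gap c d i j := by
  by_contra hno
  simp only [not_exists, not_lt] at hno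
  refine hcd (Matrix.ext fun i j => ?_)
  have := gap_rect_eq_sum (c := c) (d := d) (i.le_add_right 1) (j.le_add_right 1)
  simp only [fun i j => (hno i j).antisymm (h.gap_nonneg i j), Nat.Ico_succ_singleton,
    sum_singleton] at this
  omega

lemma Dominates.lt_of_gap_pos {N i j : ℕ} (h : Dominates N c d) (hpos : 0 < gap c d i j) :
    i < N ∧ j < N := by
  by_contra hij
  rw [h.gap_eq_zero i j (by omega)] at hpos
  exact hpos.false

theorem Dominates.exists_diagonal_rect {N : ℕ} (h : Dominates N c d)
    (hpos : ∃ i j, 0 < gap c d i j) :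
    ∃ r₁ r₂ s₁ s₂, r₁ < r₂ ∧ s₁ < s₂ ∧ 0 < c r₁ s₁ ∧ 0 < c r₂ s₂ ∧
      ∀ i j, r₁ < i → i ≤ r₂ → s₁ < j → j ≤ s₂ → 0 < gap c d i j := by
  classical
  obtain ⟨p, q, hpq, hleft, hcol⟩ := exists_corner h.gap_nonneg hpos
  have hcorner : 0 < c p q := by
    have := gap_rect_eq_sum (c := c) (d := d) (p.le_add_right 1) (q.le_add_right 1)
    simp only [hleft, hcol, Nat.Ico_succ_singleton, sum_singleton] at this
    omega
  obtain ⟨b, hpb, hend, hrun⟩ := exists_run_end (P := fun i => 0 < gap c d i (q + 1)) (N := N) hpq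
    fun m hm => by simp [h.gap_eq_zero m _ (Or.inl hm)]
  replace hend : gap c d (b + 1) (q + 1) = 0 := (h.gap_nonneg _ _).antisymm' (not_lt.1 hend)
  have hβ : ∃ s, q < s ∧ ∃ r, p < r ∧ r ≤ b ∧ 0 < c r s := by
    by_contra hno
    simp only [not_exists, not_and, not_lt, nonpos_iff_eq_zero] at hno
    have := gap_sub_le_of_eq_zero (d := d) (i := p + 1) (k := b + 1) (l := q + 1)
      (j := max N (q + 1)) (by omega) (le_max_right _ _) fun r hr s hs => by
        simp only [mem_Ico] at hr hs
        exact hno s (by omega) r (by omega) (by omega)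
    rw [h.gap_eq_zero _ _ (Or.inr (le_max_left _ _)), h.gap_eq_zero _ _ (Or.inr (le_max_left _ _)),
      hend] at this
    linarith
  obtain ⟨hqs, r, hpr, hrb, hrs⟩ := Nat.find_spec hβ
  refine ⟨p, r, q, Nat.find hβ, hpr, hqs, hcorner, hrs, fun i j hpi hir hqj hjs => ?_⟩
  have := gap_sub_le_of_eq_zero (d := d) (i := i) (k := b + 1) (l := q + 1) (j := j)
    (by omega) hqj fun r' hr' s hs => by
      simp only [mem_Ico] at hr' hs
      have := Nat.find_min hβ (show s < Nat.find hβ by omega)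
      simp only [not_exists, not_and, not_lt, nonpos_iff_eq_zero] at this
      exact this (by omega) r' (by omega) (by omega)
  linarith [h.gap_nonneg (b + 1) j, hrun i (by omega) (by omega)]

lemma prefixSum_swap {r₁ r₂ s₁ s₂ : ℕ} (c₀ : Matrix ℕ ℕ ℕ) (hr : r₁ ≤ r₂) (hs : s₁ ≤ s₂)
    (i j : ℕ) :
    prefixSum (c₀ + single r₁ s₁ 1 + single r₂ s₂ 1) i j =
      prefixSum (c₀ + single r₁ s₂ 1 + single r₂ s₁ 1) i j +
        if r₁ < i ∧ i ≤ r₂ ∧ s₁ < j ∧ j ≤ s₂ then 1 else 0 := by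
  simp only [prefixSum_add, prefixSum_single]
  split_ifs <;> omega

lemma exists_eq_add_single_add_single {r₁ r₂ s₁ s₂ : ℕ} (h₁ : 0 < c r₁ s₁) (h₂ : 0 < c r₂ s₂)
    (hr : r₁ ≠ r₂) : ∃ c₀, c = c₀ + single r₁ s₁ 1 + single r₂ s₂ 1 :=
  ⟨c - single r₁ s₁ 1 - single r₂ s₂ 1, by
    ext i j
    simp only [Matrix.add_apply, Matrix.sub_apply, single_apply]
    by_cases h1 : r₁ = i ∧ s₁ = j
    · obtain ⟨rfl, rfl⟩ := h1
      simp only [and_self, ↓reduceIte, Ne.symm hr, false_and, tsub_zero, add_zero]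
      omega
    by_cases h2 : r₂ = i ∧ s₂ = j
    · obtain ⟨rfl, rfl⟩ := h2
      simp only [hr, false_and, ↓reduceIte, tsub_zero, and_self, add_zero]
      omega
    simp only [h1, h2, if_false]
    omega⟩

section Polynomial

variable (R : Type*) [CommRing R] (n : ℕ)

noncomputable def xpow (c : Matrix ℕ ℕ ℕ) : MvPolynomial (Fin n × Fin n) R :=
  ∏ p : Fin n × Fin n, X p ^ c p.1 p.2

lemma xpow_add (c c' : Matrix ℕ ℕ ℕ) : xpow R n (c + c') = xpow R n c * xpow R n c' := by
  simp only [xpow, Matrix.add_apply, pow_add, prod_mul_distrib]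

variable {n} in
lemma xpow_single {r s : ℕ} (hr : r < n) (hs : s < n) :
    xpow R n (single r s 1) = X (⟨r, hr⟩, ⟨s, hs⟩) := by
  have hp : ∀ p : Fin n × Fin n, (r = p.1 ∧ s = p.2) ↔ (⟨r, hr⟩, ⟨s, hs⟩) = p := by
    simp [Prod.ext_iff, Fin.ext_iff]
  simp only [xpow, single_apply, hp, pow_ite, pow_one, pow_zero, Fintype.prod_ite_eq]

lemma xpow_eq_monomial (c : Matrix ℕ ℕ ℕ) :
    xpow R n c = monomial (Finsupp.equivFunOnFinite.symm fun p : Fin n × Fin n => c p.1 p.2) 1 := by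
  rw [monomial_eq, Finsupp.prod_fintype _ _ fun _ => pow_zero _]
  simp [xpow]

def IsMinorCombination (P : MvPolynomial (Fin n × Fin n) R) : Prop :=
  ∃ (N : ℕ) (ri ri' ci ci' : Fin N → Fin n) (e : Fin N → ((Fin n × Fin n) →₀ ℕ)),
    (∀ t, ri t < ri' t ∧ ci t < ci' t) ∧
    P = ∑ t, (X (ri t, ci t) * X (ri' t, ci' t) - X (ri t, ci' t) * X (ri' t, ci t)) *
      monomial (e t) 1

lemma isMinorCombination_zero : IsMinorCombination R n 0 :=
  ⟨0, Fin.elim0, Fin.elim0, Fin.elim0, Fin.elim0, Fin.elim0, fun t => t.elim0, by simp⟩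

variable {R n} in
lemma IsMinorCombination.minor_mul_monomial_add {P : MvPolynomial (Fin n × Fin n) R}
    (hP : IsMinorCombination R n P) {i i' j j' : Fin n} (hi : i < i') (hj : j < j')
    (e : (Fin n × Fin n) →₀ ℕ) :
    IsMinorCombination R n
      ((X (i, j) * X (i', j') - X (i, j') * X (i', j)) * monomial e 1 + P) := by
  obtain ⟨N, ri, ri', ci, ci', f, hlt, rfl⟩ := hP
  refine ⟨N + 1, Fin.cons i ri, Fin.cons i' ri', Fin.cons j ci, Fin.cons j' ci', Fin.cons e f,
    Fin.cases ⟨hi, hj⟩ hlt, ?_⟩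
  simp [Fin.sum_univ_succ]

end Polynomial

theorem Dominates.exists_move {R : Type*} [CommRing R] {n : ℕ} (h : Dominates n c d)
    (hcd : c ≠ d) :
    ∃ c', Dominates n c' d ∧
      ∑ i ∈ range n, ∑ j ∈ range n, prefixSum c' i j <
        ∑ i ∈ range n, ∑ j ∈ range n, prefixSum c i j ∧
      ∃ (i i' j j' : Fin n) (c₀ : Matrix ℕ ℕ ℕ), i < i' ∧ j < j' ∧
        xpow R n c - xpow R n c' =
          (X (i, j) * X (i', j') - X (i, j') * X (i', j)) * xpow R n c₀ := by
  obtain ⟨r₁, r₂, s₁, s₂, hr, hs, h₁, h₂, hrect⟩ :=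
    h.exists_diagonal_rect (h.exists_gap_pos hcd)
  obtain ⟨hr₂, hs₂⟩ := h.lt_of_gap_pos (hrect r₂ s₂ hr le_rfl hs le_rfl)
  obtain ⟨c₀, rfl⟩ := exists_eq_add_single_add_single h₁ h₂ hr.ne
  have hswap := prefixSum_swap c₀ hr.le hs.le
  have hle : ∀ i j, prefixSum (c₀ + single r₁ s₂ 1 + single r₂ s₁ 1) i j ≤
      prefixSum (c₀ + single r₁ s₁ 1 + single r₂ s₂ 1) i j := fun i j => by
    rw [hswap]
    exact Nat.le_add_right _ _
  have hgap : ∀ i j, gap (c₀ + single r₁ s₁ 1 + single r₂ s₂ 1) d i j =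
      gap (c₀ + single r₁ s₂ 1 + single r₂ s₁ 1) d i j +
        if r₁ < i ∧ i ≤ r₂ ∧ s₁ < j ∧ j ≤ s₂ then 1 else 0 := by
    intro i j
    simp only [gap, hswap]
    push_cast
    ring
  refine ⟨c₀ + single r₁ s₂ 1 + single r₂ s₁ 1, ⟨fun i j => ?_, fun i j hij => ?_⟩, ?_,
    ⟨r₁, by omega⟩, ⟨r₂, hr₂⟩, ⟨s₁, by omega⟩, ⟨s₂, hs₂⟩, c₀, hr, hs, ?_⟩
  · have := hgap i j
    split_ifs at this with hin
    · linarith [hrect i j hin.1 hin.2.1 hin.2.2.1 hin.2.2.2]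
    · linarith [h.gap_nonneg i j]
  · have := hgap i j
    rwa [h.gap_eq_zero i j hij, if_neg (by omega), add_zero, eq_comm] at this
  · refine sum_lt_sum (fun i _ => sum_le_sum fun j _ => hle i j) ⟨r₂, mem_range.2 hr₂, ?_⟩
    refine sum_lt_sum (fun j _ => hle r₂ j) ⟨s₂, mem_range.2 hs₂, ?_⟩
    rw [hswap, if_pos (by omega)]
    exact Nat.lt_succ_self _
  · simp only [xpow_add, xpow_single R hr₂ hs₂, xpow_single R (hr.trans hr₂) (hs.trans hs₂),
      xpow_single R hr₂ (hs.trans hs₂), xpow_single R (hr.trans hr₂) hs₂]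
    ring

theorem Dominates.isMinorCombination_xpow_sub {R : Type*} [CommRing R] {n : ℕ}
    (h : Dominates n c d) : IsMinorCombination R n (xpow R n c - xpow R n d) := by
  induction hm : ∑ i ∈ range n, ∑ j ∈ range n, prefixSum c i j using Nat.strong_induction_on
    generalizing c with
  | _ m ih =>
  by_cases hcd : c = d
  · rw [hcd, sub_self]
    exact isMinorCombination_zero R n
  obtain ⟨c', h', hlt, i, i', j, j', c₀, hi, hj, hmove⟩ := h.exists_move (R := R) hcd
  rw [← sub_add_sub_cancel _ (xpow R n c'), hmove, xpow_eq_monomial]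
  exact (ih _ (hm ▸ hlt) h' rfl).minor_mul_monomial_add hi hj _

section ExtendByZero

variable {n : ℕ}

def extendByZero (C : Matrix (Fin n) (Fin n) ℕ) : Matrix ℕ ℕ ℕ := fun i j =>
  if h : i < n ∧ j < n then C ⟨i, h.1⟩ ⟨j, h.2⟩ else 0

@[simp] lemma extendByZero_apply_fin (C : Matrix (Fin n) (Fin n) ℕ) (i j : Fin n) :
    extendByZero C i j = C i j := by
  simp [extendByZero]

lemma extendByZero_transpose (C : Matrix (Fin n) (Fin n) ℕ) :
    extendByZero Cᵀ = (extendByZero C)ᵀ := by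
  ext i j
  simp only [extendByZero, transpose_apply, and_comm]

lemma gap_transpose (c d : Matrix ℕ ℕ ℕ) (i j : ℕ) : gap cᵀ dᵀ j i = gap c d i j := by
  simp only [gap, prefixSum, transpose_apply, sum_comm (s := range j)]

lemma xpow_extendByZero (R : Type*) [CommRing R] (C : Matrix (Fin n) (Fin n) ℕ) :
    xpow R n (extendByZero C) = ∏ p : Fin n × Fin n, X p ^ C p.1 p.2 := by
  simp [xpow]

lemma sum_Iic_eq_sum_range_succ {M : Type*} [AddCommMonoid M] (i : Fin n) (g : ℕ → M) :
    ∑ a ∈ Iic i, g a = ∑ a ∈ range (i + 1), g a := by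
  rw [Nat.range_succ_eq_Iic, ← Fin.map_valEmbedding_Iic, sum_map]
  rfl

lemma cstar_eq_prefixSum (C : Matrix (Fin n) (Fin n) ℕ) (i j : Fin n) :
    cstar C i j = prefixSum (extendByZero C) (i + 1) (j + 1) := by
  simp only [cstar, prefixSum, ← sum_Iic_eq_sum_range_succ, extendByZero_apply_fin]

lemma sum_range_extendByZero_of_le (C : Matrix (Fin n) (Fin n) ℕ) {j : ℕ} (hj : n ≤ j) (a : ℕ) :
    ∑ b ∈ range j, extendByZero C a b = if h : a < n then ∑ b, C ⟨a, h⟩ b else 0 := by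
  rw [← sum_range_add_sum_Ico _ hj, sum_eq_zero (s := Ico n j) fun b hb => by
    simp [extendByZero, not_lt.2 (mem_Ico.1 hb).1], add_zero, ← Fin.sum_univ_eq_sum_range]
  split_ifs with h <;> simp [extendByZero, h]

lemma gap_extendByZero_eq_zero {C D : Matrix (Fin n) (Fin n) ℕ}
    (hrow : ∀ i, ∑ j, C i j = ∑ j, D i j) (i : ℕ) {j : ℕ} (hj : n ≤ j) :
    gap (extendByZero C) (extendByZero D) i j = 0 := by
  simp only [gap, prefixSum, sum_range_extendByZero_of_le _ hj, hrow, sub_self]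

theorem dominates_extendByZero {C D : Matrix (Fin n) (Fin n) ℕ}
    (hrow : ∀ i, ∑ j, C i j = ∑ j, D i j) (hcol : ∀ j, ∑ i, C i j = ∑ i, D i j)
    (hstar : ∀ i j, cstar D i j ≤ cstar C i j) :
    Dominates n (extendByZero C) (extendByZero D) := by
  have hzero : ∀ i j, n ≤ i ∨ n ≤ j → gap (extendByZero C) (extendByZero D) i j = 0 := by
    rintro i j (hi | hj)
    · rw [← gap_transpose, ← extendByZero_transpose, ← extendByZero_transpose]
      exact gap_extendByZero_eq_zero hcol j hi
    · exact gap_extendByZero_eq_zero hrow i hj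
  refine ⟨fun i j => ?_, hzero⟩
  by_cases hij : n ≤ i ∨ n ≤ j
  · exact (hzero i j hij).ge
  rcases i with _ | i
  · simp
  rcases j with _ | j
  · simp
  have := hstar ⟨i, by omega⟩ ⟨j, by omega⟩
  rw [cstar_eq_prefixSum, cstar_eq_prefixSum] at this
  simpa [gap] using this

end ExtendByZero

end DominanceOrder

theorem stmt17 (n : ℕ) (C D : Matrix (Fin n) (Fin n) ℕ)
    (hrow : ∀ i, ∑ j, C i j = ∑ j, D i j)
    (hcol : ∀ j, ∑ i, C i j = ∑ i, D i j)
    (hstar : ∀ i j, cstar D i j ≤ cstar C i j) :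
    ∃ (N : ℕ) (ri ri' ci ci' : Fin N → Fin n) (e : Fin N → ((Fin n × Fin n) →₀ ℕ)),
      (∀ t, ri t < ri' t ∧ ci t < ci' t) ∧
      (∏ p : Fin n × Fin n, (X p : MvPolynomial (Fin n × Fin n) ℤ) ^ C p.1 p.2) -
        (∏ p : Fin n × Fin n, (X p : MvPolynomial (Fin n × Fin n) ℤ) ^ D p.1 p.2) =
      ∑ t, (X (ri t, ci t) * X (ri' t, ci' t) - X (ri t, ci' t) * X (ri' t, ci t)) *
        monomial (e t) (1 : ℤ) := by
  have h := (DominanceOrder.dominates_extendByZero hrow hcol hstar).isMinorCombination_xpow_sub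
    (R := ℤ)
  rwa [DominanceOrder.xpow_extendByZero, DominanceOrder.xpow_extendByZero] at h
end
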